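/- arXiv:1412.2271 — 8 statements merged into one kernel-verified Lean document; each statement's English description precedes it below -/
import Mathlib

section
/- Let q ≥ 2 and d ≥ 2 be integers and let l_1 = 0, l_2, …, l_{d−1} be elements of ℤ_q = ℤ/qℤ such that l_i − l_j is a unit of ℤ_q whenever i ≠ j. Then every element Q of the ring R_d(ℤ_q) can be written uniquely as Q = P_1 + P_2 + ⋯ + P_d, where for each 1 ≤ i ≤ d−1 the summand P_i lies in the ℤ_q-submodule of R_d(ℤ_q) spanned by {(t+l_i)^{−k} : k ≥ 1}, and P_d lies in the image of the polynomial ring ℤ_q[t] in R_d(ℤ_q). Equivalently, the additive group of R_d(ℤ_q) is the internal direct sum of the image of ℤ_q[t] and the d−1 subgroups spanned by the negative powers of the elements t+l_i. -/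
open Polynomial

/-- The multiplicative set of `ℤ_q[t]` generated by the polynomials `t + l i`. -/
noncomputable def dlSub (q d : ℕ) (l : Fin (d-1) → ZMod q) : Submonoid (Polynomial (ZMod q)) :=
  Submonoid.closure {p | ∃ i : Fin (d-1), p = X + C (l i)}

/-- The ring `R_d(ℤ_q) = ℤ_q[t, (t+l_1)⁻¹, …, (t+l_{d-1})⁻¹]`, realized as the localization of
`ℤ_q[t]` at the multiplicative set generated by the `t + l i`. -/
abbrev Rd (q d : ℕ) (l : Fin (d-1) → ZMod q) := Localization (dlSub q d l)

/-- The image of `t + l i` in `R_d(ℤ_q)`, as a unit. -/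
noncomputable def tU (q d : ℕ) (l : Fin (d-1) → ZMod q) (i : Fin (d-1)) : (Rd q d l)ˣ :=
  (IsLocalization.map_units (M := dlSub q d l) (Rd q d l)
    ⟨X + C (l i), Submonoid.subset_closure ⟨i, rfl⟩⟩).unit

/-- The monomial `∏ i (t + l i) ^ (v i)`, as a unit of `R_d(ℤ_q)`. -/
noncomputable def monU (q d : ℕ) (l : Fin (d-1) → ZMod q) (v : Fin (d-1) → ℤ) : (Rd q d l)ˣ :=
  ∏ i, tU q d l i ^ (v i)

/-! Write `f i = X + C (a i)`. The sum of the polynomial part and the polar parts is stable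
under multiplication by every `(f i)⁻¹`: on the polar part at `i` this is clear, on the
polynomial part it is division with remainder by `f i`, and on the polar part at `j ≠ i` it
follows from the partial fraction identity `(a j - a i) (f i)⁻¹ (f j)⁻¹ = (f i)⁻¹ - (f j)⁻¹`.
As every element of the localization is a polynomial times a product of the `(f i)⁻¹`, that sum
is everything.

For uniqueness, clear the denominators of a relation `∑ P i + p = 0` with `∏ (f j) ^ n`, where
`P i * f i ^ n = g i` and `deg g i < n`. Then `f i ^ n` divides `g i * ∏_{j ≠ i} f j ^ n`; the
`f j` are pairwise coprime because their differences are units, so `f i ^ n ∣ g i`, and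
`g i = 0` by degree. -/

open Finset

theorem isCoprime_X_add_C_of_isUnit_sub {R : Type*} [CommRing R] {a b : R} (h : IsUnit (b - a)) :
    IsCoprime (X + C a) (X + C b) := by
  simpa only [C_neg, sub_neg_eq_add] using
    isCoprime_X_sub_C_of_isUnit_sub (a := -a) (b := -b) (by rwa [neg_sub_neg])

theorem eq_zero_of_X_add_C_pow_dvd {R : Type*} [CommRing R] {a : R} {n : ℕ} {g : R[X]}
    (hdvd : (X + C a) ^ n ∣ g) (hg : g.natDegree < n) : g = 0 := by
  nontriviality R
  by_contra hg0
  refine ((monic_X_add_C a).pow n).not_dvd_of_natDegree_lt hg0 ?_ hdvd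
  rwa [(monic_X_add_C a).natDegree_pow, natDegree_X_add_C, mul_one]

theorem eq_zero_of_sum_mul_prod_erase_add_eq_zero {R ι : Type*} [CommRing R] [Fintype ι]
    [DecidableEq ι] {a : ι → R} (hl : Pairwise fun i j => IsUnit (a i - a j)) {n : ℕ}
    {g : ι → R[X]} (hg : ∀ i, (g i).natDegree < n) (p : R[X])
    (h : ∑ j, g j * ∏ k ∈ univ.erase j, (X + C (a k)) ^ n +
      p * ∏ k, (X + C (a k)) ^ n = 0) (i : ι) :
    g i = 0 := by
  set f : ι → R[X] := fun k => (X + C (a k)) ^ n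
  have hdvd : f i ∣ g i * ∏ k ∈ univ.erase i, f k := by
    have hrest : g i * ∏ k ∈ univ.erase i, f k =
        -(∑ j ∈ univ.erase i, g j * ∏ k ∈ univ.erase j, f k + p * ∏ k, f k) := by
      rw [← add_sum_erase _ _ (mem_univ i)] at h
      linear_combination h
    rw [hrest]
    refine (dvd_add (dvd_sum fun j hj => dvd_mul_of_dvd_right ?_ _)
      (dvd_mul_of_dvd_right (dvd_prod_of_mem f (mem_univ i)) _)).neg_right
    exact dvd_prod_of_mem f
      (mem_erase.mpr ⟨(ne_of_mem_erase hj).symm, mem_univ i⟩)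
  have hcop : IsCoprime (f i) (∏ k ∈ univ.erase i, f k) :=
    IsCoprime.prod_right fun k hk =>
      (isCoprime_X_add_C_of_isUnit_sub (hl (ne_of_mem_erase hk))).pow
  exact eq_zero_of_X_add_C_pow_dvd (hcop.dvd_of_dvd_mul_right hdvd) (hg i)

section

variable {R : Type*} [CommRing R] {ι : Type*} (a : ι → R)

noncomputable def linearFactors : Submonoid R[X] :=
  Submonoid.closure {p | ∃ i, p = X + C (a i)}

abbrev LinearLocalization := Localization (linearFactors a)

namespace LinearLocalization

noncomputable def factorUnit (i : ι) : (LinearLocalization a)ˣ :=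
  (IsLocalization.map_units (M := linearFactors a) (LinearLocalization a)
    ⟨X + C (a i), Submonoid.subset_closure ⟨i, rfl⟩⟩).unit

noncomputable def factorInv (i : ι) : LinearLocalization a :=
  ((factorUnit a i)⁻¹ : (LinearLocalization a)ˣ)

local notation "φ" => algebraMap R[X] (LinearLocalization a)

theorem algebraMap_mul_factorInv (i : ι) :
    φ (X + C (a i)) * factorInv a i = 1 := by
  have : (factorUnit a i : LinearLocalization a) = φ (X + C (a i)) := IsUnit.unit_spec _
  rw [← this]
  exact Units.mul_inv _

theorem smul_eq_algebraMap_C_mul (c : R) (x : LinearLocalization a) : c • x = φ (C c) * x := by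
  rw [Algebra.smul_def, IsScalarTower.algebraMap_eq R R[X] (LinearLocalization a)]
  rfl

noncomputable def polarPart (i : ι) : Submodule R (LinearLocalization a) :=
  Submodule.span R {x | ∃ k : ℕ, 1 ≤ k ∧ x = factorInv a i ^ k}

noncomputable def polynomialPart : Submodule R (LinearLocalization a) :=
  (LinearMap.range (Algebra.linearMap R[X] (LinearLocalization a))).restrictScalars R

noncomputable def partialFractions : Submodule R (LinearLocalization a) :=
  polynomialPart a ⊔ ⨆ i, polarPart a i

theorem pow_mem_polarPart (i : ι) {k : ℕ} (hk : 1 ≤ k) : factorInv a i ^ k ∈ polarPart a i :=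
  Submodule.subset_span ⟨k, hk, rfl⟩

theorem factorInv_mem_polarPart (i : ι) : factorInv a i ∈ polarPart a i := by
  simpa using pow_mem_polarPart a i le_rfl

theorem polarPart_le_comap_mulRight (i : ι) :
    polarPart a i ≤ (polarPart a i).comap (LinearMap.mulRight R (factorInv a i)) := by
  refine Submodule.span_le.mpr ?_
  rintro _ ⟨k, hk, rfl⟩
  simpa [← pow_succ] using pow_mem_polarPart a i (Nat.le_succ_of_le hk)

theorem sub_smul_factorInv_mul (i j : ι) :
    (a j - a i) • (factorInv a i * factorInv a j) =
      factorInv a i - factorInv a j := by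
  have hi := algebraMap_mul_factorInv a i
  have hj := algebraMap_mul_factorInv a j
  rw [smul_eq_algebraMap_C_mul, C_sub,
    show C (a j) - C (a i) = (X + C (a j)) - (X + C (a i)) by ring, map_sub]
  linear_combination factorInv a i * hj - factorInv a j * hi

theorem polarPart_le_comap_mulRight_of_isUnit {i j : ι} (h : IsUnit (a j - a i)) :
    polarPart a j ≤
      (polarPart a i ⊔ polarPart a j).comap (LinearMap.mulRight R (factorInv a i)) := by
  obtain ⟨u, hu⟩ := h
  set vi := factorInv a i
  set vj := factorInv a j
  have hprod : vi * vj = (↑u⁻¹ : R) • (vi - vj) := by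
    rw [← sub_smul_factorInv_mul, smul_smul, ← hu, Units.inv_mul, one_smul]
  refine Submodule.span_le.mpr ?_
  rintro _ ⟨k, hk, rfl⟩
  rw [SetLike.mem_coe, Submodule.mem_comap, LinearMap.mulRight_apply]
  induction k, hk using Nat.le_induction with
  | base =>
    rw [pow_one, mul_comm, hprod]
    exact Submodule.smul_mem _ _ (Submodule.sub_mem _
      (Submodule.mem_sup_left (factorInv_mem_polarPart a i))
      (Submodule.mem_sup_right (factorInv_mem_polarPart a j)))
  | succ k hk ih =>
    have : vj ^ (k + 1) * vi = (↑u⁻¹ : R) • (vj ^ k * vi - vj ^ (k + 1)) := by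
      rw [pow_succ, mul_assoc, mul_comm vj, hprod, mul_smul_comm, mul_sub, ← pow_succ]
    rw [this]
    exact Submodule.smul_mem _ _ (Submodule.sub_mem _ ih
      (Submodule.mem_sup_right (pow_mem_polarPart a j (by omega))))

theorem polynomialPart_le_comap_mulRight (i : ι) :
    polynomialPart a ≤
      (polynomialPart a ⊔ polarPart a i).comap (LinearMap.mulRight R (factorInv a i)) := by
  rintro _ ⟨p, rfl⟩
  obtain ⟨q, hq⟩ := X_sub_C_dvd_sub_C_eval (a := -a i) (p := p)
  rw [C_neg, sub_neg_eq_add, sub_eq_iff_eq_add] at hq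
  have : φ p * factorInv a i = φ q + p.eval (-a i) • factorInv a i := by
    rw [congrArg φ hq, smul_eq_algebraMap_C_mul, map_add, map_mul, add_mul, mul_comm (φ _),
      mul_assoc, algebraMap_mul_factorInv, mul_one]
  rw [Submodule.mem_comap, LinearMap.mulRight_apply, Algebra.linearMap_apply, this]
  exact Submodule.add_mem _ (Submodule.mem_sup_left ⟨q, rfl⟩)
    (Submodule.mem_sup_right (Submodule.smul_mem _ _ (factorInv_mem_polarPart a i)))

theorem partialFractions_le_comap_mulRight (hl : Pairwise fun i j => IsUnit (a i - a j)) (i : ι) :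
    partialFractions a ≤
      (partialFractions a).comap (LinearMap.mulRight R (factorInv a i)) := by
  have hi : polarPart a i ≤ partialFractions a := le_sup_of_le_right (le_iSup _ i)
  refine sup_le ((polynomialPart_le_comap_mulRight a i).trans
    (Submodule.comap_mono (sup_le le_sup_left hi))) (iSup_le fun j => ?_)
  have hj : polarPart a j ≤ partialFractions a := le_sup_of_le_right (le_iSup _ j)
  rcases eq_or_ne j i with rfl | hji
  · exact (polarPart_le_comap_mulRight a j).trans (Submodule.comap_mono hj)
  · exact (polarPart_le_comap_mulRight_of_isUnit a (hl hji)).trans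
      (Submodule.comap_mono (sup_le hi hj))

theorem mem_partialFractions_of_mul_mem (hl : Pairwise fun i j => IsUnit (a i - a j))
    {s : R[X]} (hs : s ∈ linearFactors a) {x : LinearLocalization a}
    (hx : x * φ s ∈ partialFractions a) :
    x ∈ partialFractions a := by
  induction hs using Submonoid.closure_induction generalizing x with
  | mem s hs =>
    obtain ⟨i, rfl⟩ := hs
    have := partialFractions_le_comap_mulRight a hl i hx
    rwa [Submodule.mem_comap, LinearMap.mulRight_apply, mul_assoc,
      algebraMap_mul_factorInv, mul_one] at this
  | one => simpa using hx
  | mul s t _ _ hs ht => exact hs (ht (by rwa [map_mul, ← mul_assoc] at hx))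

theorem mem_partialFractions (hl : Pairwise fun i j => IsUnit (a i - a j))
    (x : LinearLocalization a) :
    x ∈ partialFractions a := by
  obtain ⟨⟨r, s⟩, rfl⟩ := IsLocalization.mk'_surjective (linearFactors a) x
  refine mem_partialFractions_of_mul_mem a hl s.2 ?_
  rw [IsLocalization.mk'_spec]
  exact Submodule.mem_sup_left ⟨r, rfl⟩

theorem exists_sum_polarPart_add_algebraMap [Fintype ι]
    (hl : Pairwise fun i j => IsUnit (a i - a j)) (x : LinearLocalization a) :
    ∃ P : ι → LinearLocalization a, (∀ i, P i ∈ polarPart a i) ∧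
      ∃ p : R[X], x = ∑ i, P i + φ p := by
  obtain ⟨y, ⟨p, rfl⟩, z, hz, rfl⟩ := Submodule.mem_sup.mp (mem_partialFractions a hl x)
  obtain ⟨P, hP, rfl⟩ := (Submodule.mem_iSup_iff_exists_finsupp _ z).mp hz
  refine ⟨P, hP, p, ?_⟩
  rw [Finsupp.sum_fintype _ _ fun _ => rfl, add_comm]
  rfl

theorem algebraMap_injective : Function.Injective φ :=
  IsLocalization.injective (M := linearFactors a) (LinearLocalization a) <|
    Submonoid.closure_le.mpr <| by
      rintro _ ⟨i, rfl⟩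
      exact (monic_X_add_C (a i)).mem_nonZeroDivisors

theorem exists_mul_pow_eq_algebraMap {i : ι} {x : LinearLocalization a}
    (hx : x ∈ polarPart a i) :
    ∃ N, ∀ n ≥ N, ∃ g : R[X], g.natDegree < n ∧ x * φ ((X + C (a i)) ^ n) = φ g := by
  induction hx using Submodule.span_induction with
  | mem x hx =>
    obtain ⟨k, hk, rfl⟩ := hx
    refine ⟨k, fun n hn => ?_⟩
    obtain ⟨m, rfl⟩ := Nat.exists_eq_add_of_le hn
    have hdeg : (X + C (a i)).natDegree ≤ 1 := natDegree_add_C.trans_le natDegree_X_le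
    refine ⟨(X + C (a i)) ^ m, (natDegree_pow_le_of_le m hdeg).trans_lt (by omega), ?_⟩
    rw [pow_add, map_mul, map_pow, ← mul_assoc, ← mul_pow, mul_comm (factorInv a i),
      algebraMap_mul_factorInv, one_pow, one_mul]
  | zero => exact ⟨1, fun n hn => ⟨0, by rw [natDegree_zero]; omega, by simp⟩⟩
  | add x y _ _ hx hy =>
    obtain ⟨N, hN⟩ := hx
    obtain ⟨M, hM⟩ := hy
    refine ⟨max N M, fun n hn => ?_⟩
    obtain ⟨g, hg, hxg⟩ := hN n (le_of_max_le_left hn)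
    obtain ⟨h, hh, hyh⟩ := hM n (le_of_max_le_right hn)
    exact ⟨g + h, (natDegree_add_le _ _).trans_lt (max_lt hg hh),
      by rw [add_mul, hxg, hyh, map_add]⟩
  | smul c x _ hx =>
    obtain ⟨N, hN⟩ := hx
    refine ⟨N, fun n hn => ?_⟩
    obtain ⟨g, hg, hxg⟩ := hN n hn
    exact ⟨C c * g, (natDegree_C_mul_le _ _).trans_lt hg,
      by rw [smul_eq_algebraMap_C_mul, mul_assoc, hxg, map_mul]⟩

theorem eq_zero_of_sum_polarPart_add_algebraMap_eq_zero [Fintype ι]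
    (hl : Pairwise fun i j => IsUnit (a i - a j)) {P : ι → LinearLocalization a}
    (hP : ∀ i, P i ∈ polarPart a i) {p : R[X]} (h : ∑ i, P i + φ p = 0) (i : ι) :
    P i = 0 := by
  classical
  choose N hN using fun j => exists_mul_pow_eq_algebraMap a (hP j)
  set n := univ.sup N
  choose g hg hPg using fun j => hN j n (le_sup (mem_univ j))
  set f : ι → R[X] := fun k => (X + C (a k)) ^ n
  have hPF : ∀ j, P j * φ (∏ k, f k) = φ (g j * ∏ k ∈ univ.erase j, f k) := fun j => by
    rw [← mul_prod_erase _ f (mem_univ j), map_mul, map_mul, ← mul_assoc, hPg]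
  have hsum : ∑ j, g j * ∏ k ∈ univ.erase j, f k + p * ∏ k, f k = 0 := by
    refine algebraMap_injective a ?_
    rw [map_add, map_sum, map_mul, map_zero, ← sum_congr rfl fun j _ => hPF j,
      ← sum_mul, ← add_mul, h, zero_mul]
  have hunit : IsUnit (φ (f i)) := by
    rw [map_pow]
    exact (IsUnit.of_mul_eq_one _ (algebraMap_mul_factorInv a i)).pow n
  rw [← hunit.mul_left_eq_zero, hPg, eq_zero_of_sum_mul_prod_erase_add_eq_zero hl hg p hsum i,
    map_zero]

theorem existsUnique_sum_polarPart_add_algebraMap [Fintype ι]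
    (hl : Pairwise fun i j => IsUnit (a i - a j)) (x : LinearLocalization a) :
    ∃! P : (ι → LinearLocalization a) × LinearLocalization a,
      (∀ i, P.1 i ∈ polarPart a i) ∧ P.2 ∈ RingHom.range φ ∧ x = ∑ i, P.1 i + P.2 := by
  obtain ⟨P, hP, p, rfl⟩ := exists_sum_polarPart_add_algebraMap a hl x
  refine ⟨(P, φ p), ⟨hP, ⟨p, rfl⟩, rfl⟩, ?_⟩
  rintro ⟨P', _⟩ ⟨hP', ⟨p', rfl⟩, h⟩
  have hdiff : ∑ i, (P' - P) i + φ (p' - p) = 0 := by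
    simp only [Pi.sub_apply, sum_sub_distrib, map_sub]
    linear_combination -h
  have hP'P : P' = P := funext fun i => sub_eq_zero.mp <|
    eq_zero_of_sum_polarPart_add_algebraMap_eq_zero a hl (fun i => sub_mem (hP' i) (hP i)) hdiff i
  subst hP'P
  simpa using h.symm

end LinearLocalization

end

/-- The Decomposition Lemma (Lemma 2.1): every `Q ∈ R_d(ℤ_q)` can be written uniquely as
`Q = P_1 + ⋯ + P_{d-1} + P_d`, where for `1 ≤ i ≤ d-1` the summand `P_i` lies in the
`ℤ_q`-submodule spanned by the negative powers `(t+l_i)^(-k)`, `k ≥ 1`, and `P_d` lies in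
the image of the polynomial ring `ℤ_q[t]`.  Equivalently, the additive group of
`R_d(ℤ_q)` is the internal direct sum of these `d` subgroups. -/
theorem statement0 (q d : ℕ) (l : Fin (d-1) → ZMod q)
    (hl : ∀ i j : Fin (d-1), i ≠ j → IsUnit (l i - l j))
    (Q : Rd q d l) :
    ∃! P : (Fin (d-1) → Rd q d l) × Rd q d l,
      (∀ i : Fin (d-1), P.1 i ∈ Submodule.span (ZMod q)
        {x : Rd q d l | ∃ k : ℕ, 1 ≤ k ∧ x = (((tU q d l i)⁻¹ : (Rd q d l)ˣ) : Rd q d l) ^ k}) ∧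
      P.2 ∈ (algebraMap (Polynomial (ZMod q)) (Rd q d l)).range ∧
      Q = (∑ i, P.1 i) + P.2 :=
  -- `Rd q d l` and `tU q d l` unfold to `LinearLocalization l` and `factorUnit l`.
  LinearLocalization.existsUnique_sum_polarPart_add_algebraMap l (fun i j => hl i j) Q
end

section
/- Let q ≥ 2 and d ≥ 3 be integers and let l_1 = 0, l_2, …, l_{d−1} ∈ ℤ_q with l_i − l_j a unit whenever i ≠ j. Let π be the ℤ_q-algebra homomorphism from the Laurent polynomial ring ℤ_q[x_1^{±1}, …, x_{d−1}^{±1}] to R_d(ℤ_q) determined by x_i ↦ t + l_i. Then π is surjective, and its kernel K is generated, as an additive group, by the elements x^{v}·((l_j − l_i) + x_i − x_j) where v ranges over ℤ^{d−1} (x^{v} denoting the monomial x_1^{v_1}⋯x_{d−1}^{v_{d−1}}) and i ≠ j range over 1, …, d−1; equivalently, K is the ideal generated by the finitely many elements (l_j − l_i) + x_i − x_j for i ≠ j. -/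
/-!
`π` is onto because `R_d(ℤ_q)` is generated over `ℤ_q` by `t = π(x_1)` (recall `l_1 = 0`) and the
inverses `(t + l_i)⁻¹ = π(x_i⁻¹)`. Modulo the ideal `K` of the relators every `x_i` equals
`x_1 + l_i`, so `t ↦ x_1` sends each `t + l_i` to a unit of `ℤ_q[x^{±1}]/K` and therefore extends
to `ψ : R_d(ℤ_q) → ℤ_q[x^{±1}]/K` with `ψ ∘ π` the quotient map; hence `ker π ⊆ K`. The additive
description of `K` holds because the monomials `x^v` span the Laurent ring additively.
-/

open Polynomial

/-- Monomials as a homomorphism from `ℤ^(d-1)` to the units of `R_d(ℤ_q)`. -/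
noncomputable def monHom (q d : ℕ) (l : Fin (d-1) → ZMod q) :
    Multiplicative (Fin (d-1) → ℤ) →* (Rd q d l)ˣ where
  toFun v := monU q d l (Multiplicative.toAdd v)
  map_one' := by simp [monU]
  map_mul' v w := by
    simp only [monU, toAdd_mul, Pi.add_apply, zpow_add, Finset.prod_mul_distrib]

/-- Conversion of additive automorphisms to multiplicative automorphisms of the
corresponding multiplicative group. -/
def addAutToMulAut (R : Type*) [AddCommGroup R] :
    Multiplicative (AddAut R) →* MulAut (Multiplicative R) where
  toFun e := AddEquiv.toMultiplicative (Multiplicative.toAdd e)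
  map_one' := rfl
  map_mul' _ _ := rfl

/-- The action of `ℤ^(d-1)` on (the additive group of) `R_d(ℤ_q)`, where `v` acts by
multiplication by the unit `∏ i (t + l i) ^ (v i)`. -/
noncomputable def dlAct (q d : ℕ) (l : Fin (d-1) → ZMod q) :
    Multiplicative (Fin (d-1) → ℤ) →* MulAut (Multiplicative (Rd q d l)) :=
  (addAutToMulAut (Rd q d l)).comp
    ((DistribMulAction.toAddAut (Rd q d l)ˣ (Rd q d l)).comp (monHom q d l))

/-- The Diestel–Leader group `Γ_d(q) = R_d(ℤ_q) ⋊ ℤ^(d-1)`. -/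
abbrev DLGroup (q d : ℕ) (l : Fin (d-1) → ZMod q) :=
  Multiplicative (Rd q d l) ⋊[dlAct q d l] Multiplicative (Fin (d-1) → ℤ)

/-- The Laurent polynomial ring `ℤ_q[x_1^{±1}, …, x_{d-1}^{±1}]`, i.e. the group algebra
of `ℤ^(d-1)` over `ℤ_q`. -/
abbrev dlLaurent (q d : ℕ) := AddMonoidAlgebra (ZMod q) (Fin (d-1) → ℤ)

/-- The `ℤ_q`-algebra homomorphism `π` from the Laurent polynomial ring to `R_d(ℤ_q)`
determined by `x_i ↦ t + l_i` (so the monomial `x^v` is sent to `∏ i (t+l_i)^(v i)`). -/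
noncomputable def dlPi (q d : ℕ) (l : Fin (d-1) → ZMod q) :
    dlLaurent q d →ₐ[ZMod q] Rd q d l :=
  (AddMonoidAlgebra.lift (ZMod q) (Rd q d l) (Fin (d-1) → ℤ))
    ((Units.coeHom (Rd q d l)).comp (monHom q d l))

open AddMonoidAlgebra
open scoped Pointwise

theorem MonoidHom.ext_multiplicative_pi_int {ι M : Type*} [Finite ι] [DecidableEq ι]
    [CommMonoid M] {f g : Multiplicative (ι → ℤ) →* M}
    (h : ∀ i, f (.ofAdd (Pi.single i 1)) = g (.ofAdd (Pi.single i 1))) : f = g :=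
  MonoidHom.toAdditiveRight.injective <|
    AddMonoidHom.functions_ext' _ _ _ fun i => AddMonoidHom.ext_int (congrArg Additive.ofMul (h i))

theorem AddMonoidAlgebra.addSubgroupClosure_range_single_one (n : ℕ) (G : Type*) [AddMonoid G] :
    AddSubgroup.closure (Set.range fun g : G => single g (1 : ZMod n)) = ⊤ := by
  refine (AddSubgroup.eq_top_iff' _).2 fun x => ?_
  induction x using AddMonoidAlgebra.induction_linear with
  | zero => exact zero_mem _
  | add x y hx hy => exact add_mem hx hy
  | single g c =>
    have hc : single g c = (c.cast : ℤ) • single g (1 : ZMod n) := by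
      rw [smul_single, zsmul_one, ZMod.intCast_zmod_cast]
    rw [hc]
    exact zsmul_mem (AddSubgroup.subset_closure (Set.mem_range_self g)) _

theorem Ideal.span_toAddSubgroup_eq_closure_mul {A : Type*} [Ring A] {M : Set A}
    (hM : AddSubgroup.closure M = ⊤) (S : Set A) :
    (Ideal.span S).toAddSubgroup = AddSubgroup.closure (M * S) := by
  set C := AddSubgroup.closure (M * S)
  have mul_mem_of_mem : ∀ s ∈ S, ∀ b : A, b * s ∈ C := by
    intro s hs b
    have hb : b ∈ AddSubgroup.closure M := hM ▸ AddSubgroup.mem_top b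
    induction hb using AddSubgroup.closure_induction with
    | mem m hm => exact AddSubgroup.subset_closure (Set.mul_mem_mul hm hs)
    | zero => rw [zero_mul]; exact C.zero_mem
    | add b c _ _ hb hc => rw [add_mul]; exact C.add_mem hb hc
    | neg b _ hb => rw [neg_mul]; exact C.neg_mem hb
  have mul_mem : ∀ a x : A, x ∈ C → a * x ∈ C := by
    intro a x hx
    induction hx using AddSubgroup.closure_induction with
    | mem _ hx =>
      obtain ⟨m, -, s, hs, rfl⟩ := hx
      rw [← mul_assoc]
      exact mul_mem_of_mem s hs _
    | zero => rw [mul_zero]; exact C.zero_mem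
    | add x y _ _ hx hy => rw [mul_add]; exact C.add_mem hx hy
    | neg x _ hx => rw [mul_neg]; exact C.neg_mem hx
  refine le_antisymm (fun x hx => ?_) ?_
  · induction hx using Submodule.span_induction with
    | mem s hs => simpa using mul_mem_of_mem s hs 1
    | zero => exact C.zero_mem
    | add x y _ _ hx hy => exact C.add_mem hx hy
    | smul a x _ hx => exact mul_mem a x hx
  · rw [AddSubgroup.closure_le]
    rintro _ ⟨m, -, s, hs, rfl⟩
    exact Ideal.mul_mem_left _ _ (Ideal.subset_span hs)

section DiestelLeader

variable {q d : ℕ} (l : Fin (d-1) → ZMod q)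

theorem dlPi_single (v : Fin (d-1) → ℤ) (c : ZMod q) :
    dlPi q d l (single v c) = c • (monU q d l v : Rd q d l) := by
  rw [dlPi, lift_single]
  rfl

theorem monU_single (i : Fin (d-1)) : monU q d l (Pi.single i 1) = tU q d l i := by
  rw [monU, Finset.prod_eq_single i (fun j _ hj => by rw [Pi.single_eq_of_ne hj, zpow_zero])
    (absurd (Finset.mem_univ i)), Pi.single_eq_same, zpow_one]

theorem dlPi_single_single (i : Fin (d-1)) :
    dlPi q d l (single (Pi.single i 1) 1) = algebraMap (ZMod q)[X] (Rd q d l) (X + C (l i)) := by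
  rw [dlPi_single, one_smul, monU_single]
  exact IsUnit.unit_spec _

theorem dlPi_single_neg_single_mul (i : Fin (d-1)) :
    dlPi q d l (single (-Pi.single i 1) 1) * algebraMap (ZMod q)[X] (Rd q d l) (X + C (l i))
      = 1 := by
  rw [← dlPi_single_single, ← map_mul, single_mul_single, neg_add_cancel, mul_one, ← one_def,
    map_one]

theorem algebraMap_mem_range_dlPi {i₀ : Fin (d-1)} (hl0 : l i₀ = 0) (p : (ZMod q)[X]) :
    algebraMap (ZMod q)[X] (Rd q d l) p ∈ (dlPi q d l).range := by
  have hX : algebraMap (ZMod q)[X] (Rd q d l) X ∈ (dlPi q d l).range :=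
    (AlgHom.mem_range _).2
      ⟨single (Pi.single i₀ 1) 1, by rw [dlPi_single_single, hl0, map_zero, add_zero]⟩
  rw [← aeval_X_left_apply p, ← aeval_algebraMap_apply]
  exact Algebra.adjoin_le (Set.singleton_subset_iff.2 hX) (aeval_mem_adjoin_singleton _ _)

theorem exists_dlPi_mul_algebraMap_eq_one {s : (ZMod q)[X]} (hs : s ∈ dlSub q d l) :
    ∃ g, dlPi q d l g * algebraMap (ZMod q)[X] (Rd q d l) s = 1 := by
  induction hs using Submonoid.closure_induction with
  | mem p hp =>
    obtain ⟨i, rfl⟩ := hp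
    exact ⟨_, dlPi_single_neg_single_mul l i⟩
  | one => exact ⟨1, by simp⟩
  | mul a b _ _ ha hb =>
    obtain ⟨ga, hga⟩ := ha
    obtain ⟨gb, hgb⟩ := hb
    exact ⟨ga * gb, by rw [map_mul, map_mul, mul_mul_mul_comm, hga, hgb, mul_one]⟩

theorem dlPi_surjective {i₀ : Fin (d-1)} (hl0 : l i₀ = 0) : Function.Surjective (dlPi q d l) := by
  intro z
  obtain ⟨⟨f, s⟩, rfl⟩ := IsLocalization.mk'_surjective (dlSub q d l) z
  obtain ⟨gf, hgf⟩ := (AlgHom.mem_range _).1 (algebraMap_mem_range_dlPi l hl0 f)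
  obtain ⟨gs, hgs⟩ := exists_dlPi_mul_algebraMap_eq_one l s.2
  refine ⟨gf * gs, ?_⟩
  rw [map_mul, hgf, ← IsLocalization.mk'_spec (Rd q d l) f s, mul_assoc,
    mul_comm (algebraMap _ _ _), hgs, mul_one]

noncomputable def dlRel (i j : Fin (d-1)) : dlLaurent q d :=
  single 0 (l j - l i) + single (Pi.single i 1) 1 - single (Pi.single j 1) 1

theorem dlRel_mem_ker (i j : Fin (d-1)) : dlRel l i j ∈ RingHom.ker (dlPi q d l) := by
  have h0 : dlPi q d l (single 0 (l j - l i)) = algebraMap (ZMod q)[X] (Rd q d l) (C (l j - l i)) :=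
    (dlPi q d l).commutes _ |>.trans (IsScalarTower.algebraMap_apply _ _ _ _)
  rw [RingHom.mem_ker, dlRel, map_sub, map_add, h0, dlPi_single_single, dlPi_single_single,
    ← map_add, ← map_sub, C_sub, show C (l j) - C (l i) + (X + C (l i)) - (X + C (l j)) = 0 by ring,
    map_zero]

noncomputable def dlRelIdeal : Ideal (dlLaurent q d) :=
  Ideal.span {x | ∃ i j : Fin (d-1), i ≠ j ∧ x = dlRel l i j}

theorem dlRelIdeal_le_ker : dlRelIdeal l ≤ RingHom.ker (dlPi q d l) :=
  Ideal.span_le.2 fun _ ⟨i, j, _, hx⟩ => hx ▸ dlRel_mem_ker l i j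

theorem mk_single_single_eq_mk_add {i₀ : Fin (d-1)} (hl0 : l i₀ = 0) (i : Fin (d-1)) :
    Ideal.Quotient.mk (dlRelIdeal l) (single (Pi.single i 1) 1)
      = Ideal.Quotient.mk (dlRelIdeal l) (single (Pi.single i₀ 1) 1 + single 0 (l i)) := by
  rcases eq_or_ne i₀ i with rfl | hne
  · rw [hl0, single_zero, add_zero]
  · have hrel : single (Pi.single i 1) 1 - (single (Pi.single i₀ 1) 1 + single 0 (l i))
        = -dlRel l i₀ i := by
      rw [dlRel, hl0, sub_zero]; abel
    rw [Ideal.Quotient.eq, hrel]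
    exact neg_mem (Ideal.subset_span ⟨i₀, i, hne, rfl⟩)

theorem exists_comp_dlPi_eq_mkₐ {i₀ : Fin (d-1)} (hl0 : l i₀ = 0) :
    ∃ ψ : Rd q d l →ₐ[ZMod q] dlLaurent q d ⧸ dlRelIdeal l,
      ψ.comp (dlPi q d l) = Ideal.Quotient.mkₐ (ZMod q) (dlRelIdeal l) := by
  set mk := Ideal.Quotient.mk (dlRelIdeal l)
  set φ : (ZMod q)[X] →ₐ[ZMod q] dlLaurent q d ⧸ dlRelIdeal l :=
    aeval (mk (single (Pi.single i₀ 1) 1))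
  have hφ : ∀ i, φ (X + C (l i)) = mk (single (Pi.single i 1) 1) := fun i => by
    rw [mk_single_single_eq_mk_add l hl0, map_add, aeval_X, aeval_C, map_add]
    rfl
  have hunit : ∀ s : dlSub q d l, IsUnit (φ s) := by
    suffices hle : dlSub q d l ≤ (IsUnit.submonoid _).comap φ from fun s => hle s.2
    refine Submonoid.closure_le.2 fun _ ⟨i, hi⟩ => ?_
    rw [hi, SetLike.mem_coe, Submonoid.mem_comap, IsUnit.mem_submonoid_iff, hφ]
    exact ((Group.isUnit (Multiplicative.ofAdd (Pi.single i 1))).map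
      (of (ZMod q) (Fin (d-1) → ℤ))).map mk
  refine ⟨IsLocalization.liftAlgHom (S := Rd q d l) hunit,
    algHom_ext' (MonoidHom.ext_multiplicative_pi_int fun i => ?_) (Subsingleton.elim _ _)⟩
  show IsLocalization.liftAlgHom _ (dlPi q d l (single (Pi.single i 1) 1))
    = mk (single (Pi.single i 1) 1)
  rw [dlPi_single_single, IsLocalization.liftAlgHom_apply, IsLocalization.lift_eq]
  exact hφ i

theorem ker_dlPi_eq {i₀ : Fin (d-1)} (hl0 : l i₀ = 0) :
    RingHom.ker (dlPi q d l) = dlRelIdeal l := by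
  refine le_antisymm (fun a ha => ?_) (dlRelIdeal_le_ker l)
  obtain ⟨ψ, hψ⟩ := exists_comp_dlPi_eq_mkₐ l hl0
  rw [← Ideal.Quotient.eq_zero_iff_mem, ← Ideal.Quotient.mkₐ_eq_mk (ZMod q), ← hψ,
    AlgHom.comp_apply, RingHom.mem_ker.1 ha, map_zero]

end DiestelLeader

/-- Proposition 2.2 / Section 3: `π` is surjective, and its kernel `K` is generated as an
additive group by the elements `x^v · ((l_j - l_i) + x_i - x_j)` for `v ∈ ℤ^(d-1)` and
`i ≠ j`; equivalently `K` is the ideal generated by the elements `(l_j - l_i) + x_i - x_j`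
for `i ≠ j`. -/
theorem statement1 (q d : ℕ) (hd : 3 ≤ d) (l : Fin (d-1) → ZMod q)
    (hl0 : l ⟨0, by omega⟩ = 0) :
    Function.Surjective (dlPi q d l) ∧
    (RingHom.ker (dlPi q d l)).toAddSubgroup
      = AddSubgroup.closure
          {x : dlLaurent q d | ∃ (v : Fin (d-1) → ℤ) (i j : Fin (d-1)), i ≠ j ∧
            x = AddMonoidAlgebra.single v 1 *
              (AddMonoidAlgebra.single 0 (l j - l i)
                + AddMonoidAlgebra.single (Pi.single i 1) 1
                - AddMonoidAlgebra.single (Pi.single j 1) 1)} ∧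
    RingHom.ker (dlPi q d l)
      = Ideal.span
          {x : dlLaurent q d | ∃ i j : Fin (d-1), i ≠ j ∧
            x = AddMonoidAlgebra.single 0 (l j - l i)
                + AddMonoidAlgebra.single (Pi.single i 1) 1
                - AddMonoidAlgebra.single (Pi.single j 1) 1} := by
  have hker := ker_dlPi_eq l hl0
  refine ⟨dlPi_surjective l hl0, ?_, hker⟩
  rw [hker, dlRelIdeal,
    Ideal.span_toAddSubgroup_eq_closure_mul (addSubgroupClosure_range_single_one q _)]
  congr 1
  ext x
  constructor
  · rintro ⟨_, ⟨v, rfl⟩, _, ⟨i, j, hij, rfl⟩, rfl⟩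
    exact ⟨v, i, j, hij, rfl⟩
  · rintro ⟨v, i, j, hij, rfl⟩
    exact ⟨_, ⟨v, rfl⟩, _, ⟨i, j, hij, rfl⟩, rfl⟩
end

section
/- Let A be an abelian group, B a group, and φ : B → Aut(A) an action, and let G = A ⋊_φ B. Write a^b for the action of b ∈ B on a ∈ A. Suppose the canonical copy of A in G is a characteristic subgroup of G. Then Aut(G) is isomorphic to the semidirect product Der(B, A) ⋊ T, where Der(B, A) is the abelian group of maps δ : B → A satisfying δ(b_1 b_2) = δ(b_1) + δ(b_2)^{b_1}, where T = {(α, β) ∈ Aut(A) × Aut(B) : α(a^b) = α(a)^{β(b)} for all a ∈ A, b ∈ B} with componentwise multiplication, and where (α, β) ∈ T acts on δ ∈ Der(B, A) by δ^{(α,β)} = α ∘ δ ∘ β^{−1}. Explicitly, the pair (δ, (α, β)) corresponds to the automorphism (a, b) ↦ (α(a) + δ(β(b)), β(b)) of G. -/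
/-- The group of derivations: maps `δ : B → A` satisfying `δ(b₁b₂) = δ(b₁) · (δ(b₂))^(b₁)`,
where the action of `b ∈ B` on the abelian group `A` is written `a^b := φ b a`.  (It is a
subgroup of the group of all maps `B → A` under pointwise multiplication.) -/
def derivSubgroup {A : Type*} [CommGroup A] {B : Type*} [Group B] (φ : B →* MulAut A) :
    Subgroup (B → A) where
  carrier := {δ | ∀ b₁ b₂ : B, δ (b₁ * b₂) = δ b₁ * φ b₁ (δ b₂)}
  one_mem' := by intro b₁ b₂; simp
  mul_mem' := by
    intro δ δ' h h' b₁ b₂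
    simp only [Pi.mul_apply, h b₁ b₂, h' b₁ b₂, map_mul]
    exact mul_mul_mul_comm _ _ _ _
  inv_mem' := by
    intro δ h b₁ b₂
    simp only [Pi.inv_apply, h b₁ b₂, map_inv, mul_inv]

/-- The subgroup `T` of `Aut(A) × Aut(B)` of compatible pairs `(α, β)`, i.e. those with
`α(a^b) = α(a)^(β b)` for all `a ∈ A`, `b ∈ B`. -/
def tSubgroup {A : Type*} [CommGroup A] {B : Type*} [Group B] (φ : B →* MulAut A) :
    Subgroup (MulAut A × MulAut B) where
  carrier := {p | ∀ (a : A) (b : B), p.1 (φ b a) = φ (p.2 b) (p.1 a)}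
  one_mem' := by intro a b; rfl
  mul_mem' := by
    intro x y hx hy a b
    show x.1 (y.1 (φ b a)) = φ (x.2 (y.2 b)) (x.1 (y.1 a))
    rw [hy a b, hx]
  inv_mem' := by
    intro x hx a b
    show x.1.symm (φ b a) = φ (x.2.symm b) (x.1.symm a)
    apply x.1.injective
    rw [MulEquiv.apply_symm_apply, hx, MulEquiv.apply_symm_apply, MulEquiv.apply_symm_apply]

/-!
Write `shear δ (a, b) = (a · δ b, b)` and `α × β` for the automorphism `(a, b) ↦ (α a, β b)`.
The action of `T` on derivations is exactly conjugation of shears by the `α × β`, so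
`(δ, (α, β)) ↦ shear δ ∘ (α × β)` is a homomorphism `Der(B, A) ⋊ T → Aut(A ⋊ B)`, clearly
injective. When `A` is characteristic, an automorphism `e` restricts to some `α` on `A` and
induces some `β` on `(A ⋊ B) ⧸ A ≅ B`, so `e (a, b) = (α a · d b, β b)` where `d b` is the
`A`-component of `e b`; multiplicativity of `e` forces `(α, β) ∈ T` and `d ∘ β⁻¹ ∈ Der(B, A)`.
-/

section Action

variable {A : Type*} [CommGroup A] {B : Type*} [Group B] {φ : B →* MulAut A}

lemma derivSubgroup.map_mul (δ : derivSubgroup φ) (b₁ b₂ : B) :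
    (δ : B → A) (b₁ * b₂) = (δ : B → A) b₁ * φ b₁ ((δ : B → A) b₂) :=
  δ.2 b₁ b₂

lemma tSubgroup.map_smul (p : tSubgroup φ) (a : A) (b : B) :
    (p : MulAut A × MulAut B).1 (φ b a)
      = φ ((p : MulAut A × MulAut B).2 b) ((p : MulAut A × MulAut B).1 a) :=
  p.2 a b

instance : SMul (tSubgroup φ) (derivSubgroup φ) where
  smul p δ := ⟨fun b => (p : MulAut A × MulAut B).1 ((δ : B → A) ((p : MulAut A × MulAut B).2⁻¹ b)),
    fun b₁ b₂ => by
      simp only [map_mul, derivSubgroup.map_mul, tSubgroup.map_smul, MulAut.apply_inv_self]⟩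

lemma tSubgroup.smul_apply (p : tSubgroup φ) (δ : derivSubgroup φ) (b : B) :
    ((p • δ : derivSubgroup φ) : B → A) b
      = (p : MulAut A × MulAut B).1 ((δ : B → A) ((p : MulAut A × MulAut B).2⁻¹ b)) :=
  rfl

instance : MulDistribMulAction (tSubgroup φ) (derivSubgroup φ) where
  one_smul _ := rfl
  mul_smul _ _ _ := rfl
  smul_mul _ _ _ := Subtype.ext <| funext fun _ => map_mul _ _ _
  smul_one _ := Subtype.ext <| funext fun _ => map_one _

end Action

namespace SemidirectProduct

variable {A : Type*} [CommGroup A] {B : Type*} [Group B] {φ : B →* MulAut A}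

def shear (δ : derivSubgroup φ) : MulAut (A ⋊[φ] B) where
  toFun g := ⟨g.left * (δ : B → A) g.right, g.right⟩
  invFun g := ⟨g.left * ((δ : B → A) g.right)⁻¹, g.right⟩
  left_inv g := by simp
  right_inv g := by simp
  map_mul' g h := by
    ext
    · simp only [mul_left, mul_right, derivSubgroup.map_mul, _root_.map_mul]
      ac_rfl
    · rfl

lemma shear_apply (δ : derivSubgroup φ) (g : A ⋊[φ] B) :
    shear δ g = ⟨g.left * (δ : B → A) g.right, g.right⟩ :=
  rfl

def shearHom : derivSubgroup φ →* MulAut (A ⋊[φ] B) where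
  toFun := shear
  map_one' := by ext <;> simp [shear_apply]
  map_mul' δ δ' := by
    ext g
    · simp only [shear_apply, MulAut.mul_apply, Subgroup.coe_mul, Pi.mul_apply]
      rw [mul_comm ((δ : B → A) _), mul_assoc]
    · rfl

def pairAut : tSubgroup φ →* MulAut (A ⋊[φ] B) where
  toFun p := congr (p : MulAut A × MulAut B).1 (p : MulAut A × MulAut B).2
    fun b => MulEquiv.ext fun a => tSubgroup.map_smul p a b
  map_one' := rfl
  map_mul' _ _ := rfl

lemma pairAut_apply (p : tSubgroup φ) (g : A ⋊[φ] B) :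
    pairAut p g = ⟨(p : MulAut A × MulAut B).1 g.left, (p : MulAut A × MulAut B).2 g.right⟩ :=
  rfl

lemma shear_smul (p : tSubgroup φ) (δ : derivSubgroup φ) :
    shear (p • δ) = pairAut p * shear δ * (pairAut p)⁻¹ := by
  refine eq_mul_inv_of_mul_eq (MulEquiv.ext fun g => ?_)
  simp [shear_apply, pairAut_apply, tSubgroup.smul_apply]

def autHom : derivSubgroup φ ⋊[MulDistribMulAction.toMulAut (tSubgroup φ) (derivSubgroup φ)]
    tSubgroup φ →* MulAut (A ⋊[φ] B) :=
  lift shearHom pairAut fun p => by ext δ : 1; exact shear_smul p δ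

lemma autHom_apply
    (x : derivSubgroup φ ⋊[MulDistribMulAction.toMulAut (tSubgroup φ) (derivSubgroup φ)]
      tSubgroup φ) (g : A ⋊[φ] B) :
    autHom x g = ⟨(x.right : MulAut A × MulAut B).1 g.left
      * (x.left : B → A) ((x.right : MulAut A × MulAut B).2 g.right),
      (x.right : MulAut A × MulAut B).2 g.right⟩ :=
  rfl

lemma autHom_injective : Function.Injective (autHom (φ := φ)) := by
  refine (injective_iff_map_eq_one _).2 fun ⟨δ, p⟩ h => ?_
  have hfix (g : A ⋊[φ] B) : autHom ⟨δ, p⟩ g = g := DFunLike.congr_fun h g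
  have hβ (b : B) : (p : MulAut A × MulAut B).2 b = b := congrArg right (hfix ⟨1, b⟩)
  have hδ (b : B) : (δ : B → A) b = 1 := by
    simpa [autHom_apply, hβ] using congrArg left (hfix ⟨1, b⟩)
  have hα (a : A) : (p : MulAut A × MulAut B).1 a = a := by
    simpa [autHom_apply, hδ] using congrArg left (hfix ⟨a, 1⟩)
  ext x
  · exact hδ x
  · exact hα x
  · exact hβ x

lemma apply_mul_of_map_eq_mk (f : A ⋊[φ] B →* A ⋊[φ] B) (α : A →* A) (β : B →* B) (d : B → A)
    (hf : ∀ g, f g = ⟨α g.left * d g.right, β g.right⟩) (b₁ b₂ : B) :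
    d (b₁ * b₂) = d b₁ * φ (β b₁) (d b₂) := by
  simpa [hf] using congrArg left (f.map_mul (inr b₁) (inr b₂))

lemma compatible_of_map_eq_mk (f : A ⋊[φ] B →* A ⋊[φ] B) (α : A →* A) (β : B →* B) (d : B → A)
    (hf : ∀ g, f g = ⟨α g.left * d g.right, β g.right⟩) (a : A) (b : B) :
    α (φ b a) = φ (β b) (α a) := by
  have hd₁ : d 1 = 1 := by simpa using apply_mul_of_map_eq_mk f α β d hf 1 1
  have h := f.map_mul (inr b) (inl a)
  rw [hf, hf, hf] at h
  simpa [hd₁, mul_comm] using congrArg left h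

lemma exists_mulAut_map_inl (hchar : (inl.range : Subgroup (A ⋊[φ] B)).Characteristic)
    (e : MulAut (A ⋊[φ] B)) : ∃ α : MulAut A, ∀ a, e (inl a) = inl (α a) := by
  let ι := MonoidHom.ofInjective (inl_injective (φ := φ))
  refine ⟨MulAut.congr ι.symm (MulAut.characteristic _ e), fun a => ?_⟩
  simp [ι, MonoidHom.apply_ofInjective_symm, MonoidHom.ofInjective_apply]

lemma exists_mulAut_eq_right_map_inr
    (hchar : (inl.range : Subgroup (A ⋊[φ] B)).Characteristic) (e : MulAut (A ⋊[φ] B)) :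
    ∃ β : MulAut B, ∀ b, β b = (e (inr b)).right := by
  let q := QuotientGroup.quotientKerEquivOfRightInverse (rightHom (φ := φ)) inr rightHom_inr
  have hker : rightHom.ker.map (e : A ⋊[φ] B →* A ⋊[φ] B) = rightHom.ker :=
    range_inl_eq_ker_rightHom (φ := φ) ▸ Subgroup.characteristic_iff_map_eq.1 hchar e
  exact ⟨(q.symm.trans (QuotientGroup.congr _ _ e hker)).trans q, fun b => rfl⟩

lemma exists_map_eq_mk (hchar : (inl.range : Subgroup (A ⋊[φ] B)).Characteristic)
    (e : MulAut (A ⋊[φ] B)) :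
    ∃ (α : MulAut A) (β : MulAut B),
      ∀ g, e g = ⟨α g.left * (e (inr g.right)).left, β g.right⟩ := by
  obtain ⟨α, hα⟩ := exists_mulAut_map_inl hchar e
  obtain ⟨β, hβ⟩ := exists_mulAut_eq_right_map_inr hchar e
  refine ⟨α, β, fun g => ?_⟩
  conv_lhs => rw [← inl_left_mul_inr_right g, map_mul, hα]
  ext <;> simp [hβ]

lemma autHom_surjective (hchar : (inl.range : Subgroup (A ⋊[φ] B)).Characteristic) :
    Function.Surjective (autHom (φ := φ)) := by
  intro e
  obtain ⟨α, β, he⟩ := exists_map_eq_mk hchar e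
  let d : B → A := fun b => (e (inr b)).left
  have hd := apply_mul_of_map_eq_mk e.toMonoidHom α.toMonoidHom β.toMonoidHom d he
  have hαβ := compatible_of_map_eq_mk e.toMonoidHom α.toMonoidHom β.toMonoidHom d he
  refine ⟨⟨⟨d ∘ β.symm, fun c₁ c₂ => ?_⟩, ⟨(α, β), hαβ⟩⟩, ?_⟩
  · simp [hd]
  · ext g <;> simp [autHom_apply, he g, d]

end SemidirectProduct

/-- Proposition 3.1.  Let `G = A ⋊_φ B` with `A` abelian, and suppose the canonical copy
of `A` in `G` is characteristic.  Then `Aut(G) ≅ Der(B, A) ⋊ T`, where `(α, β) ∈ T` acts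
on a derivation `δ` by `α ∘ δ ∘ β⁻¹`, and the pair `(δ, (α, β))` corresponds to the
automorphism `(a, b) ↦ (α(a) · δ(β(b)), β(b))` of `G`. -/
theorem statement3 {A : Type*} [CommGroup A] {B : Type*} [Group B] (φ : B →* MulAut A)
    (hchar : (SemidirectProduct.inl.range : Subgroup (A ⋊[φ] B)).Characteristic) :
    ∃ ρ : tSubgroup φ →* MulAut (derivSubgroup φ),
      (∀ (p : tSubgroup φ) (δ : derivSubgroup φ) (b : B),
        ((ρ p δ : B → A) b)
          = (p : MulAut A × MulAut B).1
              ((δ : B → A) (((p : MulAut A × MulAut B).2)⁻¹ b))) ∧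
      ∃ F : (derivSubgroup φ) ⋊[ρ] (tSubgroup φ) ≃* MulAut (A ⋊[φ] B),
        ∀ (δ : derivSubgroup φ) (p : tSubgroup φ) (a : A) (b : B),
          F ⟨δ, p⟩ ⟨a, b⟩
            = ⟨(p : MulAut A × MulAut B).1 a
                  * (δ : B → A) ((p : MulAut A × MulAut B).2 b),
                (p : MulAut A × MulAut B).2 b⟩ := by
  exact ⟨MulDistribMulAction.toMulAut _ _, fun _ _ _ => rfl,
    MulEquiv.ofBijective SemidirectProduct.autHom
      ⟨SemidirectProduct.autHom_injective, SemidirectProduct.autHom_surjective hchar⟩,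
    fun _ _ _ _ => rfl⟩
end

section
/- Let q ≥ 2 and d ≥ 2 be integers and let l_1 = 0, l_2, …, l_{d−1} ∈ ℤ_q with l_i − l_j a unit whenever i ≠ j, and let Γ_d(q) = R_d(ℤ_q) ⋊ ℤ^{d−1}. Let 𝒦 be the group of matrices β = (b_{i,j}) ∈ GL_{d−1}(ℤ) such that for all 1 ≤ i ≠ j ≤ d−1 the identity (l_j − l_i) + ∏_{k=1}^{d−1}(t+l_k)^{b_{k,i}} − ∏_{k=1}^{d−1}(t+l_k)^{b_{k,j}} = 0 holds in R_d(ℤ_q), and the same identities hold for the entries of β^{−1}. Each β ∈ 𝒦 induces a ring automorphism σ_β of R_d(ℤ_q) determined by ∏_i(t+l_i)^{v_i} ↦ ∏_i(t+l_i)^{(βv)_i} for v ∈ ℤ^{d−1}, and σ_β preserves the unit group U(R_d(ℤ_q)). Then Aut(Γ_d(q)) is isomorphic to Der(ℤ^{d−1}, R_d(ℤ_q)) ⋊ (U(R_d(ℤ_q)) ⋊ 𝒦), where Der(ℤ^{d−1}, R_d(ℤ_q)) is the abelian group of maps δ : ℤ^{d−1} → R_d(ℤ_q) satisfying δ(v +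 w) = δ(v) + (∏_i(t+l_i)^{v_i})·δ(w); the element β ∈ 𝒦 acts on U(R_d(ℤ_q)) by σ_β, and (R_0, β) ∈ U(R_d(ℤ_q)) ⋊ 𝒦 acts on δ by v ↦ R_0 · σ_β(δ(β^{−1}(v))). -/
open Polynomial

/-- The condition on a `(d-1) × (d-1)` integer matrix `β = (b k i)` that, for all `i ≠ j`,
`(l j - l i) + ∏ k (t + l k)^(b k i) - ∏ k (t + l k)^(b k j) = 0` holds in `R_d(ℤ_q)`. -/
def kCond (q d : ℕ) (l : Fin (d-1) → ZMod q) (β : Matrix (Fin (d-1)) (Fin (d-1)) ℤ) : Prop :=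
  ∀ i j : Fin (d-1), i ≠ j →
    algebraMap (Polynomial (ZMod q)) (Rd q d l) (C (l j - l i))
      + (monU q d l (fun k => β k i) : Rd q d l)
      - (monU q d l (fun k => β k j) : Rd q d l) = 0

/-- The set `𝒦` of invertible integer matrices `β` such that the defining identities hold
both for the entries of `β` and for the entries of `β⁻¹`. -/
def kSet (q d : ℕ) (l : Fin (d-1) → ZMod q) : Set (Matrix.GeneralLinearGroup (Fin (d-1)) ℤ) :=
  {β | kCond q d l ↑β ∧ kCond q d l ↑(β⁻¹)}

/-!
Every automorphism of `Γ = R ⋊ ℤ^(d-1)` maps `R` into itself, because `R` has exponent `q` and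
`ℤ^(d-1)` is torsion-free. For any semidirect product `N ⋊ G` with `N` abelian, the automorphisms
preserving `N` are exactly the maps `(n, g) ↦ (α n * δ (β g), β g)` with `δ` a derivation and
`(α, β) ∈ Aut N × Aut G` a compatible pair, `α (g • n) = β g • α n`; this identifies them with
`Der(G, N) ⋊ {compatible pairs}`.

For `Γ` compatibility reads `α (m v * a) = m (β v) * α a` for the monomials
`m v = ∏ i (t + l i) ^ v i`. Writing `t = (t + l i) - l i` for two indices and evaluating at
`α⁻¹ 1` gives the identities defining `𝒦` for `β`, and likewise for `β⁻¹` via `α⁻¹`; so `σ_β`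
exists, `α ∘ σ_β⁻¹` commutes with all monomials, hence is `R`-linear, and `α = α 1 * σ_β` with
`α 1` a unit. The compatible pairs are therefore exactly the `(R₀ * σ_β, β)`.
-/

def MonoidHom.toMulAut {H M : Type*} [Group H] [MulOneClass M] (f : H →* Monoid.End M) :
    H →* MulAut M where
  toFun h :=
    { toFun := f h
      invFun := f h⁻¹
      left_inv x := by
        change (f h⁻¹ * f h) x = x
        rw [← map_mul, inv_mul_cancel, map_one]; rfl
      right_inv x := by
        change (f h * f h⁻¹) x = x
        rw [← map_mul, mul_inv_cancel, map_one]; rfl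
      map_mul' := map_mul (f h) }
  map_one' := MulEquiv.ext fun x => by simp
  map_mul' g h := MulEquiv.ext fun x => by simp

namespace SemidirectProduct

variable {N G : Type*} [CommGroup N] [Group G] (φ : G →* MulAut N)

def compatiblePairs : Subgroup (MulAut N × MulAut G) where
  carrier := {p | ∀ g n, p.1 (φ g n) = φ (p.2 g) (p.1 n)}
  one_mem' g n := rfl
  mul_mem' {p p'} hp hp' g n := by
    simp only [Prod.fst_mul, Prod.snd_mul, MulAut.mul_apply]
    rw [hp', hp]
  inv_mem' {p} hp g n := by
    apply p.1.injective
    simp only [Prod.fst_inv, Prod.snd_inv, MulAut.apply_inv_self]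
    rw [hp, MulAut.apply_inv_self, MulAut.apply_inv_self]

variable {φ}

theorem compatiblePairs_comm (p : compatiblePairs φ) (g : G) (n : N) :
    p.1.1 (φ g n) = φ (p.1.2 g) (p.1.1 n) :=
  p.2 g n

theorem apply_one_of_mem_derivSubgroup {δ : G → N} (hδ : δ ∈ derivSubgroup φ) : δ 1 = 1 := by
  have h := hδ 1 1
  rw [mul_one, map_one, MulAut.one_apply] at h
  exact mul_eq_left.mp h.symm

theorem comp_mem_derivSubgroup (p : compatiblePairs φ) {δ : G → N} (hδ : δ ∈ derivSubgroup φ) :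
    (fun g => p.1.1 (δ (p.1.2⁻¹ g))) ∈ derivSubgroup φ := by
  intro g₁ g₂
  change p.1.1 (δ (p.1.2⁻¹ (g₁ * g₂))) = p.1.1 (δ (p.1.2⁻¹ g₁)) * φ g₁ (p.1.1 (δ (p.1.2⁻¹ g₂)))
  rw [map_mul, hδ, map_mul, compatiblePairs_comm p, MulAut.apply_inv_self]

variable (φ)

def derivAct : compatiblePairs φ →* MulAut (derivSubgroup φ) :=
  MonoidHom.toMulAut
    { toFun p :=
        { toFun δ := ⟨fun g => p.1.1 (δ.1 (p.1.2⁻¹ g)), comp_mem_derivSubgroup p δ.2⟩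
          map_one' := by ext; simp
          map_mul' δ δ' := by ext; simp }
      map_one' := rfl
      map_mul' p p' := rfl }

variable {φ}

theorem derivAct_apply (p : compatiblePairs φ) (δ : derivSubgroup φ) (g : G) :
    (derivAct φ p δ : G → N) g = p.1.1 ((δ : G → N) (p.1.2⁻¹ g)) := rfl

def twist (δ : derivSubgroup φ) (p : compatiblePairs φ) : N ⋊[φ] G →* N ⋊[φ] G where
  toFun x := ⟨p.1.1 x.left * (δ : G → N) (p.1.2 x.right), p.1.2 x.right⟩
  map_one' := by ext <;> simp [apply_one_of_mem_derivSubgroup δ.2]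
  map_mul' x y := by
    ext
    · simp only [mul_left, mul_right, map_mul, compatiblePairs_comm p,
        δ.2 (p.1.2 x.right) (p.1.2 y.right)]
      ac_rfl
    · simp

@[simp] theorem twist_left (δ : derivSubgroup φ) (p : compatiblePairs φ) (x : N ⋊[φ] G) :
    (twist δ p x).left = p.1.1 x.left * (δ : G → N) (p.1.2 x.right) := rfl

@[simp] theorem twist_right (δ : derivSubgroup φ) (p : compatiblePairs φ) (x : N ⋊[φ] G) :
    (twist δ p x).right = p.1.2 x.right := rfl

theorem twist_one (x : N ⋊[φ] G) : twist 1 1 x = x := by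
  ext <;> simp

theorem twist_mul (δ δ' : derivSubgroup φ) (p p' : compatiblePairs φ) (x : N ⋊[φ] G) :
    twist (δ * derivAct φ p δ') (p * p') x = twist δ p (twist δ' p' x) := by
  ext
  · simp only [twist_left, twist_right, derivAct_apply, Subgroup.coe_mul, Prod.fst_mul,
      Prod.snd_mul, MulAut.mul_apply, Pi.mul_apply, map_mul, MulAut.inv_apply_self]
    rw [mul_assoc, mul_comm ((δ : G → N) _)]
  · simp

variable (φ)

def twistAut : derivSubgroup φ ⋊[derivAct φ] compatiblePairs φ →* MulAut (N ⋊[φ] G) :=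
  MonoidHom.toMulAut
    { toFun x := twist x.left x.right
      map_one' := by ext x : 1; exact twist_one x
      map_mul' x y := by ext z : 1; exact twist_mul _ _ _ _ z }

variable {φ}

theorem twistAut_apply (x : derivSubgroup φ ⋊[derivAct φ] compatiblePairs φ) (y : N ⋊[φ] G) :
    twistAut φ x y = twist x.left x.right y := rfl

theorem twistAut_injective : Function.Injective (twistAut φ) := by
  refine (injective_iff_map_eq_one _).mpr fun x hx => ?_
  have h (y : N ⋊[φ] G) : twist x.left x.right y = y := by rw [← twistAut_apply, hx]; rfl
  have hβ (g : G) : x.right.1.2 g = g := by simpa using congrArg right (h (inr g))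
  have hδ (g : G) : (x.left : G → N) g = 1 := by
    simpa [hβ] using congrArg left (h (inr g))
  have hα (n : N) : x.right.1.1 n = n := by
    simpa [hβ, hδ] using congrArg left (h (inl n))
  ext : 1
  · exact Subtype.ext (funext hδ)
  · exact Subtype.ext (Prod.ext (MulEquiv.ext hα) (MulEquiv.ext hβ))

theorem mul_inl_mul_inv (y : N ⋊[φ] G) (n : N) : y * inl n * y⁻¹ = inl (φ y.right n) := by
  ext
  · simp only [mul_left, mul_right, inv_left, left_inl, right_inl, mul_one, map_inv,
      MulAut.apply_inv_self]
    rw [mul_comm y.left, mul_assoc, mul_inv_cancel, mul_one]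
  · simp

section Restrict

variable (f : MulAut (N ⋊[φ] G)) (hf : ∀ n, (f (inl n)).right = 1)
  (hf' : ∀ n, (f⁻¹ (inl n)).right = 1)

include hf

theorem apply_inl_of_right_eq_one (n : N) : f (inl n) = inl (f (inl n)).left := by
  ext
  · rfl
  · exact hf n

theorem right_apply_of_right_eq_one (x : N ⋊[φ] G) : (f x).right = (f (inr x.right)).right := by
  conv_lhs => rw [← inl_left_mul_inr_right x, map_mul, mul_right, hf, one_mul]

include hf'

def restrictLeft : MulAut N where
  toFun n := (f (inl n)).left
  invFun n := (f⁻¹ (inl n)).left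
  left_inv n := by
    simp only
    rw [← apply_inl_of_right_eq_one f hf, MulAut.inv_apply_self, left_inl]
  right_inv n := by
    simp only
    rw [← apply_inl_of_right_eq_one f⁻¹ hf', MulAut.apply_inv_self, left_inl]
  map_mul' n m := by rw [map_mul inl n m, map_mul, mul_left, hf, map_one, MulAut.one_apply]

def restrictRight : MulAut G where
  toFun g := (f (inr g)).right
  invFun g := (f⁻¹ (inr g)).right
  left_inv g := by
    simp only
    rw [← right_apply_of_right_eq_one f⁻¹ hf' (f (inr g)), MulAut.inv_apply_self, right_inr]
  right_inv g := by
    simp only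
    rw [← right_apply_of_right_eq_one f hf (f⁻¹ (inr g)), MulAut.apply_inv_self, right_inr]
  map_mul' g g' := by rw [map_mul inr, map_mul, mul_right]

theorem restrict_mem_compatiblePairs :
    (restrictLeft f hf hf', restrictRight f hf hf') ∈ compatiblePairs φ := by
  intro g n
  have h : f (inl (φ g n)) = f (inr g) * inl (f (inl n)).left * (f (inr g))⁻¹ := by
    rw [inl_aut g n, map_mul, map_mul, map_inv inr, map_inv f, apply_inl_of_right_eq_one f hf n]
    rfl
  change (f (inl (φ g n))).left = φ (f (inr g)).right (f (inl n)).left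
  rw [h, mul_inl_mul_inv, left_inl]

def restrictDeriv : derivSubgroup φ :=
  ⟨fun g => (f (inr ((restrictRight f hf hf')⁻¹ g))).left, fun g₁ g₂ => by
    simp only
    rw [map_mul, map_mul inr, map_mul, mul_left]
    congr
    exact MulAut.apply_inv_self _ (restrictRight f hf hf') g₁⟩

theorem twistAut_restrict :
    twistAut φ ⟨restrictDeriv f hf hf', ⟨_, restrict_mem_compatiblePairs f hf hf'⟩⟩ = f := by
  suffices (twistAut φ ⟨restrictDeriv f hf hf', ⟨_, restrict_mem_compatiblePairs f hf hf'⟩⟩ :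
      N ⋊[φ] G →* N ⋊[φ] G) = f from MulEquiv.ext (DFunLike.congr_fun this ·)
  refine hom_ext (MonoidHom.ext fun n => ?_) (MonoidHom.ext fun g => ?_)
  · change twist _ _ (inl n) = f (inl n)
    ext
    · simp [apply_one_of_mem_derivSubgroup (restrictDeriv f hf hf').2, restrictLeft]
    · simp [hf]
  · change twist _ _ (inr g) = f (inr g)
    ext
    · simp [restrictDeriv]
    · rfl

end Restrict

theorem twistAut_surjective (h : ∀ (f : MulAut (N ⋊[φ] G)) n, (f (inl n)).right = 1) :
    Function.Surjective (twistAut φ) :=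
  fun f => ⟨_, twistAut_restrict f (h f) (h f⁻¹)⟩

end SemidirectProduct

namespace Matrix.GeneralLinearGroup

open Multiplicative

variable (n R : Type*) [Fintype n] [DecidableEq n] [CommRing R]

def mulVecMulAut : GL n R →* MulAut (Multiplicative (n → R)) where
  toFun A :=
    { toFun v := ofAdd ((A : Matrix n n R) *ᵥ toAdd v)
      invFun v := ofAdd ((A⁻¹ : GL n R) *ᵥ toAdd v)
      left_inv v := by simp [mulVec_mulVec]
      right_inv v := by simp [mulVec_mulVec]
      map_mul' v w := by simp [mulVec_add] }
  map_one' := by ext; simp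
  map_mul' A B := by ext; simp [mulVec_mulVec]

variable {n R}

theorem mulVecMulAut_apply (A : GL n R) (v : Multiplicative (n → R)) :
    mulVecMulAut n R A v = ofAdd ((A : Matrix n n R) *ᵥ toAdd v) := rfl

theorem mulVecMulAut_injective : Function.Injective (mulVecMulAut n R) := by
  refine (injective_iff_map_eq_one _).mpr fun A hA => Units.ext ?_
  ext i j
  simpa [mulVecMulAut_apply, one_apply, Pi.single_apply] using
    congrArg (fun e : MulAut (Multiplicative (n → R)) => toAdd (e (ofAdd (Pi.single j 1))) i) hA

theorem mulVecMulAut_surjective : Function.Surjective (mulVecMulAut n ℤ) := by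
  intro e
  let e' := (AddEquiv.toMultiplicative.symm e).toIntLinearEquiv (modM := Pi.module _ _ ℤ)
    (modM₂ := Pi.module _ _ ℤ)
  refine ⟨toLin.symm (LinearMap.GeneralLinearGroup.ofLinearEquiv e'), MulEquiv.ext fun v => ?_⟩
  rw [mulVecMulAut_apply, ← mulVecLin_apply, ← toLin_apply, MulEquiv.apply_symm_apply]
  rfl

end Matrix.GeneralLinearGroup

namespace DiestelLeader

open Polynomial Matrix SemidirectProduct Multiplicative GeneralLinearGroup

variable {q d : ℕ} {l : Fin (d-1) → ZMod q} {B B' : Matrix (Fin (d-1)) (Fin (d-1)) ℤ}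

theorem coe_tU (i : Fin (d-1)) :
    (tU q d l i : Rd q d l) = algebraMap (ZMod q)[X] (Rd q d l) (X + C (l i)) :=
  IsUnit.unit_spec _

theorem monU_single (i : Fin (d-1)) : monU q d l (Pi.single i 1) = tU q d l i := by
  classical
  rw [monU, Fintype.prod_eq_single i fun j hj => by simp [Pi.single_eq_of_ne hj]]
  simp

theorem monU_sum {ι : Type*} (s : Finset ι) (f : ι → Fin (d-1) → ℤ) :
    monU q d l (∑ i ∈ s, f i) = ∏ i ∈ s, monU q d l (f i) := by
  rw [← toAdd_ofAdd (∑ i ∈ s, f i), ofAdd_sum]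
  exact map_prod (monHom q d l) _ s

theorem monU_zsmul (n : ℤ) (v : Fin (d-1) → ℤ) : monU q d l (n • v) = monU q d l v ^ n :=
  map_zpow (monHom q d l) (ofAdd v) n

theorem monU_mulVec (v : Fin (d-1) → ℤ) :
    monU q d l (B *ᵥ v) = ∏ i, monU q d l (fun k => B k i) ^ v i := by
  have h : B *ᵥ v = ∑ i, v i • fun k => B k i := by
    ext k; simp [mulVec, dotProduct, mul_comm]
  simp only [h, monU_sum, monU_zsmul]

theorem algebraMap_X (i : Fin (d-1)) :
    algebraMap (ZMod q)[X] (Rd q d l) X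
      = monU q d l (Pi.single i 1) - algebraMap (ZMod q)[X] (Rd q d l) (C (l i)) := by
  rw [monU_single, coe_tU, map_add, add_sub_cancel_right]

theorem algebraMap_C_mul (c : ZMod q) (a : Rd q d l) :
    algebraMap (ZMod q)[X] (Rd q d l) (C c) * a = c • a := by
  rw [Algebra.smul_def, IsScalarTower.algebraMap_apply (ZMod q) (ZMod q)[X] (Rd q d l),
    Polynomial.algebraMap_eq]

theorem q_nsmul_eq_zero (a : Rd q d l) : q • a = 0 := by
  rw [nsmul_eq_mul, ← map_natCast (algebraMap (ZMod q) (Rd q d l)), ZMod.natCast_self, map_zero,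
    zero_mul]

theorem dlAct_apply (v : Multiplicative (Fin (d-1) → ℤ)) (a : Multiplicative (Rd q d l)) :
    dlAct q d l v a = ofAdd (monU q d l (toAdd v) * toAdd a) := rfl

theorem aut_inl_right_eq_one [NeZero q] (f : MulAut (DLGroup q d l))
    (n : Multiplicative (Rd q d l)) : (f (inl n)).right = 1 := by
  have hn : n ^ q = 1 := q_nsmul_eq_zero (toAdd n)
  apply pow_left_injective (NeZero.ne q)
  change rightHom (f (inl n)) ^ q = 1 ^ q
  rw [← map_pow, ← map_pow, ← map_pow, hn, map_one, map_one, map_one, one_pow]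

theorem kCond_one : kCond q d l 1 := by
  intro i j _
  have hcol (i : Fin (d-1)) :
      (fun k => (1 : Matrix (Fin (d-1)) (Fin (d-1)) ℤ) k i) = Pi.single i 1 := by
    ext k; simp [one_apply, Pi.single_apply]
  rw [hcol, hcol, monU_single, monU_single, coe_tU, coe_tU, ← map_add, ← map_sub]
  convert map_zero (algebraMap (ZMod q)[X] (Rd q d l))
  rw [map_sub]; ring

-- The paper's `σ_B` on `ℤ_q[t]`; under `kCond` the choice of `i₀` does not matter.
noncomputable def sigmaPoly (i₀ : Fin (d-1)) (B : Matrix (Fin (d-1)) (Fin (d-1)) ℤ) :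
    (ZMod q)[X] →+* Rd q d l :=
  eval₂RingHom ((algebraMap (ZMod q)[X] (Rd q d l)).comp C)
    (monU q d l (fun k => B k i₀) - algebraMap (ZMod q)[X] (Rd q d l) (C (l i₀)))

theorem sigmaPoly_X_add_C (i₀ : Fin (d-1)) (hB : kCond q d l B) (i : Fin (d-1)) :
    sigmaPoly i₀ B (X + C (l i)) = (monU q d l (fun k => B k i) : Rd q d l) := by
  simp only [sigmaPoly, map_add, coe_eval₂RingHom, eval₂_X, eval₂_C, RingHom.comp_apply]
  rcases eq_or_ne i₀ i with rfl | hne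
  · ring
  · have h := hB i₀ i hne
    rw [map_sub, map_sub] at h
    linear_combination h

noncomputable def sigmaHom (i₀ : Fin (d-1)) (hB : kCond q d l B) : Rd q d l →+* Rd q d l :=
  IsLocalization.lift (M := dlSub q d l) (g := sigmaPoly i₀ B) fun s => by
    suffices dlSub q d l ≤ (IsUnit.submonoid (Rd q d l)).comap (sigmaPoly i₀ B) from this s.2
    refine Submonoid.closure_le.mpr ?_
    rintro _ ⟨i, rfl⟩
    simp only [Submonoid.coe_comap, Set.mem_preimage, SetLike.mem_coe, IsUnit.mem_submonoid_iff,
      sigmaPoly_X_add_C i₀ hB i, Units.isUnit]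

theorem sigmaHom_algebraMap (i₀ : Fin (d-1)) (hB : kCond q d l B) (p : (ZMod q)[X]) :
    sigmaHom i₀ hB (algebraMap _ _ p) = sigmaPoly i₀ B p :=
  IsLocalization.lift_eq _ _

theorem sigmaHom_monU (i₀ : Fin (d-1)) (hB : kCond q d l B) (v : Fin (d-1) → ℤ) :
    sigmaHom i₀ hB (monU q d l v) = monU q d l (B *ᵥ v) := by
  have ht (i : Fin (d-1)) :
      Units.map (sigmaHom i₀ hB).toMonoidHom (tU q d l i) = monU q d l (fun k => B k i) := by
    ext
    rw [Units.coe_map, RingHom.toMonoidHom_eq_coe, MonoidHom.coe_coe, coe_tU,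
      sigmaHom_algebraMap, sigmaPoly_X_add_C i₀ hB]
  suffices Units.map (sigmaHom i₀ hB).toMonoidHom (monU q d l v) = monU q d l (B *ᵥ v) from
    congrArg Units.val this
  rw [monU_mulVec, monU, map_prod]
  simp only [map_zpow, ht]

theorem col_mul_eq_mulVec (i : Fin (d-1)) :
    (fun k => (B * B') k i) = B *ᵥ fun k => B' k i := by
  ext k; simp [mul_apply, mulVec, dotProduct]

theorem kCond_mul (hB : kCond q d l B) (hB' : kCond q d l B') : kCond q d l (B * B') := by
  intro i j hij
  have h := congrArg (sigmaHom i hB) (hB' i j hij)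
  rw [map_sub, map_add, sigmaHom_algebraMap, sigmaHom_monU, sigmaHom_monU, map_zero,
    sigmaPoly, coe_eval₂RingHom, eval₂_C, RingHom.comp_apply] at h
  rwa [col_mul_eq_mulVec, col_mul_eq_mulVec]

def kSubgroup (q d : ℕ) (l : Fin (d-1) → ZMod q) :
    Subgroup (Matrix.GeneralLinearGroup (Fin (d-1)) ℤ) where
  carrier := kSet q d l
  one_mem' := ⟨kCond_one, by simpa using kCond_one⟩
  mul_mem' ha hb := ⟨kCond_mul ha.1 hb.1, by simpa using kCond_mul hb.2 ha.2⟩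
  inv_mem' ha := ⟨ha.2, by simpa using ha.1⟩

theorem map_algebraMap_X_mul (E : Rd q d l →+ Rd q d l)
    (hE : ∀ v a, E (monU q d l v * a) = monU q d l (B *ᵥ v) * E a) (k : Fin (d-1))
    (a : Rd q d l) :
    E (algebraMap (ZMod q)[X] (Rd q d l) X * a)
      = (monU q d l (B *ᵥ Pi.single k 1) - algebraMap (ZMod q)[X] (Rd q d l) (C (l k))) * E a := by
  rw [algebraMap_X k, sub_mul, sub_mul, map_sub, hE, algebraMap_C_mul, algebraMap_C_mul,
    ZMod.map_smul E]

theorem kCond_of_map_monU_mul (e : Rd q d l ≃+ Rd q d l)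
    (he : ∀ v a, e (monU q d l v * a) = monU q d l (B *ᵥ v) * e a) : kCond q d l B := by
  intro i j _
  have h := (map_algebraMap_X_mul e.toAddMonoidHom he i (e.symm 1)).symm.trans
    (map_algebraMap_X_mul e.toAddMonoidHom he j (e.symm 1))
  simp only [AddEquiv.coe_toAddMonoidHom, AddEquiv.apply_symm_apply, mul_one,
    mulVec_single_one] at h
  have hcol (k : Fin (d-1)) : B.col k = fun r => B r k := rfl
  rw [hcol, hcol] at h
  simp only [map_sub]
  linear_combination h

variable [Nonempty (Fin (d-1))]

theorem ringHom_ext {S : Type*} [Ring S] {f g : Rd q d l →+* S}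
    (h : ∀ v, f (monU q d l v) = g (monU q d l v)) : f = g := by
  apply IsLocalization.ringHom_ext (dlSub q d l)
  have hC (c : ZMod q) : f (algebraMap _ _ (C c)) = g (algebraMap _ _ (C c)) :=
    congrArg (· c) (RingHom.ext_zmod ((f.comp (algebraMap _ _)).comp C)
      ((g.comp (algebraMap _ _)).comp C))
  apply Polynomial.ringHom_ext hC
  rw [RingHom.comp_apply, RingHom.comp_apply, algebraMap_X (Classical.arbitrary _), map_sub,
    map_sub, h, hC]

-- Commuting with `t` makes `E` a `ℤ_q[t]`-linear map, and linearity passes to the localization.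
theorem map_mul_of_map_monU_mul (E : Rd q d l →+ Rd q d l)
    (hE : ∀ v a, E (monU q d l v * a) = monU q d l v * E a) (x a : Rd q d l) :
    E (x * a) = x * E a := by
  have hX := map_algebraMap_X_mul E (B := 1) (by simpa using hE) (Classical.arbitrary _)
  simp only [one_mulVec, ← algebraMap_X] at hX
  let L : Rd q d l →ₗ[(ZMod q)[X]] Rd q d l :=
    { E with
      map_smul' p a := by
        simp only [Algebra.smul_def, AddMonoidHom.toFun_eq_coe, RingHom.id_apply]
        induction p using Polynomial.induction_on generalizing a with
        | C c => rw [algebraMap_C_mul, algebraMap_C_mul, ZMod.map_smul E]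
        | add p p' hp hp' => rw [map_add, add_mul, add_mul, map_add, hp, hp']
        | monomial n c ih =>
          have h (b : Rd q d l) : algebraMap (ZMod q)[X] (Rd q d l) (C c * X ^ (n + 1)) * b
              = algebraMap (ZMod q)[X] (Rd q d l) (C c * X ^ n)
                * (algebraMap (ZMod q)[X] (Rd q d l) X * b) := by
            rw [pow_succ, ← mul_assoc, map_mul, mul_assoc]
          rw [h, ih, hX, h] }
  exact (L.extendScalarsOfIsLocalization (dlSub q d l) (Rd q d l)).map_smul x a

theorem sigmaHom_comp_sigmaHom (hB : kCond q d l B) (hB' : kCond q d l B') (hBB' : B * B' = 1)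
    (i₀ i₁ : Fin (d-1)) : (sigmaHom i₀ hB).comp (sigmaHom i₁ hB') = RingHom.id _ :=
  ringHom_ext fun v => by
    simp only [RingHom.comp_apply, sigmaHom_monU, mulVec_mulVec, hBB', one_mulVec,
      RingHom.id_apply]

noncomputable def sigmaAut : kSubgroup q d l →* RingAut (Rd q d l) where
  toFun β := RingEquiv.ofRingHom (sigmaHom (Classical.arbitrary _) β.2.1)
    (sigmaHom (Classical.arbitrary _) β.2.2) (sigmaHom_comp_sigmaHom _ _ (Units.mul_inv _) _ _)
    (sigmaHom_comp_sigmaHom _ _ (Units.inv_mul _) _ _)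
  map_one' := RingEquiv.toRingHom_injective <| ringHom_ext fun v => by
    simp [sigmaHom_monU]
  map_mul' β β' := RingEquiv.toRingHom_injective <| ringHom_ext fun v => by
    simp [sigmaHom_monU, mulVec_mulVec]

theorem sigmaAut_monU (β : kSubgroup q d l) (v : Fin (d-1) → ℤ) :
    sigmaAut β (monU q d l v) = monU q d l ((β : GL (Fin (d-1)) ℤ) *ᵥ v) :=
  sigmaHom_monU _ β.2.1 v

noncomputable def sigmaUnitsAut : kSubgroup q d l →* MulAut (Rd q d l)ˣ where
  toFun β := Units.mapEquiv (sigmaAut β).toMulEquiv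
  map_one' := by ext; simp
  map_mul' β β' := by ext; simp

theorem coe_sigmaUnitsAut_apply (β : kSubgroup q d l) (u : (Rd q d l)ˣ) :
    (sigmaUnitsAut β u : Rd q d l) = sigmaAut β u := rfl

theorem exists_eq_unit_mul_sigmaAut (e : Rd q d l ≃+ Rd q d l) (A : GL (Fin (d-1)) ℤ)
    (he : ∀ v a, e (monU q d l v * a) = monU q d l ((A : Matrix _ _ ℤ) *ᵥ v) * e a) :
    ∃ (hA : A ∈ kSubgroup q d l) (u : (Rd q d l)ˣ), ∀ a, e a = u * sigmaAut ⟨A, hA⟩ a := by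
  have he' (v : Fin (d-1) → ℤ) (a : Rd q d l) :
      e.symm (monU q d l v * a) = monU q d l ((A⁻¹ : GL (Fin (d-1)) ℤ) *ᵥ v) * e.symm a := by
    apply e.injective
    rw [he, AddEquiv.apply_symm_apply, AddEquiv.apply_symm_apply, mulVec_mulVec, Units.mul_inv,
      one_mulVec]
  have hA : A ∈ kSubgroup q d l := ⟨kCond_of_map_monU_mul e he, kCond_of_map_monU_mul e.symm he'⟩
  set σ := sigmaAut ⟨A, hA⟩
  have hσ (v : Fin (d-1) → ℤ) :
      σ.symm (monU q d l v) = monU q d l ((A⁻¹ : GL (Fin (d-1)) ℤ) *ᵥ v) := by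
    rw [RingEquiv.symm_apply_eq, sigmaAut_monU, mulVec_mulVec]
    simp
  have hE := map_mul_of_map_monU_mul (e.toAddMonoidHom.comp σ.symm.toAddMonoidHom) fun v a => by
    change e (σ.symm (monU q d l v * a)) = monU q d l v * e (σ.symm a)
    rw [map_mul, hσ, he, mulVec_mulVec, Units.mul_inv, one_mulVec]
  have key (a : Rd q d l) : e a = σ a * e 1 := by simpa using hE (σ a) 1
  have hu : IsUnit (e 1) := IsUnit.of_mul_eq_one (σ (e.symm 1)) <| by
    rw [mul_comm, ← key, AddEquiv.apply_symm_apply]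
  exact ⟨hA, hu.unit, fun a => by rw [key, IsUnit.unit_spec, mul_comm]⟩

noncomputable def unitMulSigma (x : (Rd q d l)ˣ ⋊[sigmaUnitsAut] kSubgroup q d l) :
    MulAut (Multiplicative (Rd q d l)) :=
  AddEquiv.toMultiplicative
    ((sigmaAut x.right).toAddEquiv.trans (DistribMulAction.toAddEquiv _ x.left))

theorem unitMulSigma_apply (x : (Rd q d l)ˣ ⋊[sigmaUnitsAut] kSubgroup q d l)
    (a : Multiplicative (Rd q d l)) :
    unitMulSigma x a = ofAdd (x.left * sigmaAut x.right (toAdd a)) := rfl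

noncomputable def toCompatiblePair :
    (Rd q d l)ˣ ⋊[sigmaUnitsAut] kSubgroup q d l →* compatiblePairs (dlAct q d l) where
  toFun x := ⟨(unitMulSigma x, mulVecMulAut _ ℤ x.right), fun v a => by
    simp only [unitMulSigma_apply, dlAct_apply, mulVecMulAut_apply, toAdd_ofAdd, map_mul,
      sigmaAut_monU]
    ring_nf⟩
  map_one' := by
    ext a : 3
    · simp [unitMulSigma_apply]
    · simp
  map_mul' x y := by
    ext a : 3
    · change unitMulSigma (x * y) a = unitMulSigma x (unitMulSigma y a)
      simp only [unitMulSigma_apply, mul_left, mul_right, map_mul, Units.val_mul,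
        coe_sigmaUnitsAut_apply, RingAut.mul_apply, toAdd_ofAdd, mul_assoc]
    · simp

theorem coe_toCompatiblePair (x : (Rd q d l)ˣ ⋊[sigmaUnitsAut] kSubgroup q d l) :
    (toCompatiblePair x : MulAut _ × MulAut _)
      = (unitMulSigma x, mulVecMulAut _ ℤ (x.right : GL (Fin (d-1)) ℤ)) := rfl

theorem toCompatiblePair_injective :
    Function.Injective (toCompatiblePair (q := q) (d := d) (l := l)) := by
  refine (injective_iff_map_eq_one _).mpr fun x hx => ?_
  have hr : x.right = 1 := Subtype.ext <| mulVecMulAut_injective <|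
    (congrArg (fun p : compatiblePairs (dlAct q d l) => p.1.2) hx).trans (map_one _).symm
  have hl : x.left = 1 := Units.ext <| by
    simpa [coe_toCompatiblePair, unitMulSigma_apply, hr] using
      congrArg (fun p : compatiblePairs (dlAct q d l) => toAdd (p.1.1 (ofAdd 1))) hx
  ext : 1 <;> simp [hl, hr]

theorem toCompatiblePair_surjective :
    Function.Surjective (toCompatiblePair (q := q) (d := d) (l := l)) := by
  intro p
  obtain ⟨A, hA⟩ := mulVecMulAut_surjective p.1.2
  have he (v : Fin (d-1) → ℤ) (a : Rd q d l) :
      toAdd (p.1.1 (ofAdd (monU q d l v * a)))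
        = monU q d l ((A : Matrix _ _ ℤ) *ᵥ v) * toAdd (p.1.1 (ofAdd a)) := by
    have h := congrArg toAdd (p.2 (ofAdd v) (ofAdd a))
    rwa [← hA] at h
  obtain ⟨hAK, u, hu⟩ := exists_eq_unit_mul_sigmaAut (AddEquiv.toMultiplicative.symm p.1.1) A he
  exact ⟨⟨u, ⟨A, hAK⟩⟩,
    Subtype.ext <| Prod.ext (MulEquiv.ext fun a => (congrArg ofAdd (hu a)).symm) hA⟩

noncomputable def toAut :
    derivSubgroup (dlAct q d l) ⋊[(derivAct _).comp toCompatiblePair]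
        ((Rd q d l)ˣ ⋊[sigmaUnitsAut] kSubgroup q d l) →* MulAut (DLGroup q d l) :=
  (twistAut _).comp (map (MonoidHom.id _) toCompatiblePair fun _ => rfl)

theorem toAut_bijective [NeZero q] : Function.Bijective (toAut (q := q) (d := d) (l := l)) := by
  constructor
  · refine twistAut_injective.comp fun x y hxy => ?_
    ext : 1
    · simpa using congrArg left hxy
    · exact toCompatiblePair_injective (by simpa using congrArg right hxy)
  · intro f
    obtain ⟨⟨δ, p⟩, hx⟩ := twistAut_surjective aut_inl_right_eq_one f
    obtain ⟨y, rfl⟩ := toCompatiblePair_surjective p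
    exact ⟨⟨δ, y⟩, hx⟩

end DiestelLeader

/-- Theorem 3.2: `Aut(Γ_d(q)) ≅ Der(ℤ^(d-1), R_d(ℤ_q)) ⋊ (U(R_d(ℤ_q)) ⋊ 𝒦)`, where `𝒦`
is the group of integer matrices `β ∈ GL_{d-1}(ℤ)` satisfying
`(l_j - l_i) + ∏_k (t+l_k)^(b_{k,i}) - ∏_k (t+l_k)^(b_{k,j}) = 0` (for `β` and `β⁻¹`);
each `β ∈ 𝒦` induces a ring automorphism `σ_β` of `R_d(ℤ_q)` with
`σ_β(∏ (t+l_i)^(v i)) = ∏ (t+l_i)^((βv) i)`, preserving the unit group, `β` acts on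
`U(R_d(ℤ_q))` by `σ_β`, and `(R₀, β)` acts on a derivation `δ` by
`v ↦ R₀ · σ_β(δ(β⁻¹ v))`. -/
theorem statement4 (q d : ℕ) (hq : 2 ≤ q) (hd : 2 ≤ d) (l : Fin (d-1) → ZMod q) :
    ∃ K : Subgroup (Matrix.GeneralLinearGroup (Fin (d-1)) ℤ),
      (K : Set (Matrix.GeneralLinearGroup (Fin (d-1)) ℤ)) = kSet q d l ∧
      ∃ σ : K →* RingAut (Rd q d l),
        (∀ (β : K) (v : Fin (d-1) → ℤ),
          σ β (monU q d l v : Rd q d l)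
            = (monU q d l
                (((β : Matrix.GeneralLinearGroup (Fin (d-1)) ℤ) :
                    Matrix (Fin (d-1)) (Fin (d-1)) ℤ).mulVec v) : Rd q d l)) ∧
        ∃ ψ : K →* MulAut (Rd q d l)ˣ,
          (∀ (β : K) (u : (Rd q d l)ˣ), ((ψ β u : (Rd q d l)ˣ) : Rd q d l) = σ β ↑u) ∧
          ∃ ρ : ((Rd q d l)ˣ ⋊[ψ] K) →* MulAut (derivSubgroup (dlAct q d l)),
            (∀ (R₀ : (Rd q d l)ˣ) (β : K) (δ : derivSubgroup (dlAct q d l))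
                (v : Fin (d-1) → ℤ),
              ((ρ ⟨R₀, β⟩ δ :
                  Multiplicative (Fin (d-1) → ℤ) → Multiplicative (Rd q d l))
                  (Multiplicative.ofAdd v))
                = Multiplicative.ofAdd ((R₀ : Rd q d l) *
                    σ β (Multiplicative.toAdd
                      ((δ : Multiplicative (Fin (d-1) → ℤ) → Multiplicative (Rd q d l))
                        (Multiplicative.ofAdd
                          ((((β⁻¹ : K) : Matrix.GeneralLinearGroup (Fin (d-1)) ℤ) : Matrix (Fin (d-1)) (Fin (d-1)) ℤ).mulVec v))))) ) ∧
            Nonempty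
              (MulAut (DLGroup q d l) ≃*
                (derivSubgroup (dlAct q d l)) ⋊[ρ] ((Rd q d l)ˣ ⋊[ψ] K)) := by
  have : NeZero q := ⟨by omega⟩
  have : Nonempty (Fin (d-1)) := ⟨⟨0, by omega⟩⟩
  exact ⟨DiestelLeader.kSubgroup q d l, rfl, DiestelLeader.sigmaAut, DiestelLeader.sigmaAut_monU,
    DiestelLeader.sigmaUnitsAut, fun _ _ => rfl,
    (SemidirectProduct.derivAct _).comp DiestelLeader.toCompatiblePair, fun _ _ _ _ => rfl,
    ⟨(MulEquiv.ofBijective _ DiestelLeader.toAut_bijective).symm⟩⟩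
end

section
/- Let d > 3, q ≥ 2, and l_1 = 0, l_2, …, l_{d−1} ∈ ℤ_q with l_i − l_j a unit whenever i ≠ j, and let 𝒦 = {β = (b_{i,j}) ∈ GL_{d−1}(ℤ) : (l_j − l_i) + ∏_k(t+l_k)^{b_{k,i}} − ∏_k(t+l_k)^{b_{k,j}} = 0 in R_d(ℤ_q) for all i ≠ j, and likewise for the entries of β^{−1}}. If 𝒦 is nontrivial, then q = d−1 and q is prime, every nontrivial element of 𝒦 is a permutation matrix whose permutation is a single cycle of length d−1, and 𝒦 is cyclic of order d−1. Moreover, when q = d−1 is prime and l_i = i−1 for 1 ≤ i ≤ d−1, 𝒦 is the cyclic group of order d−1 generated by the permutation matrix (b_{i,j}) with b_{i+1,i} = 1 for 1 ≤ i ≤ d−2, b_{1,d−1} = 1, and all other entries 0. -/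
open Polynomial

/-!
Clearing denominators, the defining identities of `β ∈ 𝒦` become identities
`F i - F j = (l i - l j) • D` in `ℤ_q[t]` between monic products of the linear factors `t + l k`.
With at least three columns, comparing degrees shows that all `F i` have the same degree, and
evaluating at the roots `t = -l k`, where the differences `l i - l j` are units, shows that a factor
`t + l k` divides at most one `F i` and does not divide `D`. So `β` is `m` times a permutation
matrix `P σ`, and `m = 1` since `det β = ±1`. Such a `P σ` satisfies the identities exactly when
`σ` is a translation `l (σ i) = l i + c`. A nonzero `c` is a difference of two `l`'s, hence a unit,
so its orbit makes `l` a bijection onto `ℤ_q`: thus `q = d - 1`, every nonzero element of `ℤ_q` is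
a unit `l i - l 0`, so `q` is prime, and `𝒦` is the cyclic group of the translations.
-/

section LinearFactors

variable {R ι : Type*} [CommRing R] [Fintype ι] (l : ι → R)

noncomputable def linProd (v : ι → ℕ) : R[X] := ∏ k, (X + C (l k)) ^ v k

lemma monic_linProd (v : ι → ℕ) : (linProd l v).Monic :=
  monic_prod_of_monic _ _ fun k _ => (monic_X_add_C (l k)).pow (v k)

lemma natDegree_linProd [Nontrivial R] (v : ι → ℕ) : (linProd l v).natDegree = ∑ k, v k := by
  rw [linProd, natDegree_prod_of_monic _ _ fun k _ => (monic_X_add_C (l k)).pow (v k)]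
  simp [(monic_X_add_C _).natDegree_pow]

lemma eval_neg_linProd (v : ι → ℕ) (k : ι) :
    eval (-l k) (linProd l v) = ∏ j, (l j - l k) ^ v j := by
  simp [linProd, eval_prod, sub_eq_neg_add, add_comm]

lemma eval_neg_linProd_eq_zero {v : ι → ℕ} {k : ι} (hk : v k ≠ 0) :
    eval (-l k) (linProd l v) = 0 := by
  rw [eval_neg_linProd]
  exact Finset.prod_eq_zero (Finset.mem_univ k) (by rw [sub_self, zero_pow hk])

lemma isUnit_eval_neg_linProd (hl : Pairwise fun i j => IsUnit (l i - l j)) {v : ι → ℕ} {k : ι}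
    (hk : v k = 0) : IsUnit (eval (-l k) (linProd l v)) := by
  rw [eval_neg_linProd, IsUnit.prod_iff]
  intro j _
  obtain rfl | hjk := eq_or_ne j k
  · simp [hk]
  · exact (hl hjk).pow _

end LinearFactors

lemma Polynomial.natDegree_eq_of_natDegree_sub_eq {R ι : Type*} [CommRing R]
    (hι : ∀ a b : ι, ∃ c, c ≠ a ∧ c ≠ b) {F : ι → R[X]} (hF : ∀ i, (F i).Monic) {n : ℕ}
    (hsub : ∀ i j, i ≠ j → (F i - F j).natDegree = n) (i j : ι) :
    (F i).natDegree = (F j).natDegree := by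
  suffices key : ∀ a b, ¬ (F a).natDegree < (F b).natDegree by
    exact le_antisymm (not_lt.mp (key j i)) (not_lt.mp (key i j))
  intro a b hab
  have hn : n = (F b).natDegree := by
    rw [← hsub b a (fun h => (h ▸ hab).false), natDegree_sub_eq_left_of_natDegree_lt hab]
  obtain ⟨c, hca, hcb⟩ := hι a b
  rcases lt_trichotomy (F c).natDegree (F b).natDegree with hcb' | hcb' | hcb'
  · have := (natDegree_sub_le (F c) (F a)).trans_lt (max_lt hcb' hab)
    rw [hsub c a hca] at this
    omega
  · have := IsMonicOfDegree.natDegree_sub_lt (by omega) ⟨hcb', hF c⟩ ⟨rfl, hF b⟩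
    rw [hsub c b hcb] at this
    omega
  · have := natDegree_sub_eq_left_of_natDegree_lt hcb'
    rw [hsub c b hcb] at this
    omega

lemma exists_perm_of_sum_eq {ι : Type*} [Fintype ι] [DecidableEq ι] {f : ι → ι → ℕ} {m : ℕ}
    (hm : m ≠ 0) (hrow : ∀ k i j, f k i ≠ 0 → f k j ≠ 0 → i = j) (hcol : ∀ i, ∑ k, f k i = m) :
    ∃ σ : Equiv.Perm ι, ∀ k i, f k i = if k = σ i then m else 0 := by
  have hsupp (i : ι) : ∃ k, f k i ≠ 0 := by
    obtain ⟨k, -, hk⟩ := Finset.exists_ne_zero_of_sum_ne_zero ((hcol i).trans_ne hm)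
    exact ⟨k, hk⟩
  choose w hw using hsupp
  have hw_inj : Function.Injective w := fun i j hij => hrow (w i) i j (hw i) (hij ▸ hw j)
  let σ := Equiv.ofBijective w (Finite.injective_iff_bijective.mp hw_inj)
  have hzero (k i : ι) (hk : k ≠ σ i) : f k i = 0 := by
    by_contra hki
    obtain ⟨j, rfl⟩ := σ.surjective k
    exact hk (congrArg σ (hrow (σ j) j i (hw j) hki))
  refine ⟨σ, fun k i => ?_⟩
  split_ifs with hk
  · rw [← hcol i, Finset.sum_eq_single k (fun k' _ hk' => hzero k' i (hk ▸ hk')) (by simp)]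
  · exact hzero k i hk

section ExponentPattern

variable {R ι : Type*} [CommRing R] [Fintype ι] {l : ι → R} {f : ι → ι → ℕ} {e : ι → ℕ}
  (hF : ∀ i j, i ≠ j → linProd l (f · i) - linProd l (f · j) = C (l i - l j) * linProd l e)
include hF

lemma eval_neg_linProd_sub (k : ι) {i j : ι} (hij : i ≠ j) :
    eval (-l k) (linProd l (f · i)) - eval (-l k) (linProd l (f · j))
      = (l i - l j) * eval (-l k) (linProd l e) := by
  rw [← eval_sub, hF i j hij, eval_mul, eval_C]

variable [Nontrivial R] (hl : Pairwise fun i j => IsUnit (l i - l j))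
include hl

lemma exponent_eq_zero_of_ne_zero {k : ι} (hk : e k ≠ 0) {i₀ : ι} (hi₀ : f k i₀ = 0) (i : ι) :
    f k i = 0 := by
  obtain rfl | hi := eq_or_ne i i₀
  · exact hi₀
  by_contra hki
  have := eval_neg_linProd_sub hF k hi
  rw [eval_neg_linProd_eq_zero l (v := (f · i)) hki, eval_neg_linProd_eq_zero l hk, mul_zero,
    zero_sub, neg_eq_zero] at this
  exact (isUnit_eval_neg_linProd l hl (v := (f · i₀)) hi₀).ne_zero this

lemma exponent_eq_zero_of_ne (he : ∀ k, e k ≠ 0 → ∃ i, f k i = 0) {k i j : ι} (hij : i ≠ j)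
    (hki : f k i ≠ 0) : f k j = 0 := by
  obtain hk | hk := eq_or_ne (e k) 0
  · by_contra hkj
    have := eval_neg_linProd_sub hF k hij
    rw [eval_neg_linProd_eq_zero l (v := (f · i)) hki,
      eval_neg_linProd_eq_zero l (v := (f · j)) hkj, sub_zero] at this
    exact ((hl hij).mul (isUnit_eval_neg_linProd l hl hk)).ne_zero this.symm
  · obtain ⟨i₀, hi₀⟩ := he k hk
    exact exponent_eq_zero_of_ne_zero hF hl hk hi₀ j

theorem linProd_exponents_eq_perm [DecidableEq ι] (hι : 2 < Fintype.card ι)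
    (he : ∀ k, e k ≠ 0 → ∃ i, f k i = 0) :
    e = 0 ∧ ∃ (σ : Equiv.Perm ι) (m : ℕ), ∀ k i, f k i = if k = σ i then m else 0 := by
  have hι₃ := ENat.exists_ne_ne_of_three_le (α := ι)
    (by simp [ENat.card_eq_coe_fintype_card]; omega)
  obtain ⟨i₀⟩ : Nonempty ι := Fintype.card_pos_iff.mp (by omega)
  obtain ⟨i₁, hi₁, -⟩ := hι₃ i₀ i₀
  have hsub_ne (i j : ι) (hij : i ≠ j) : linProd l (f · i) - linProd l (f · j) ≠ 0 := by
    rw [hF i j hij, Ne, (isUnit_C.mpr (hl hij)).mul_right_eq_zero]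
    exact (monic_linProd l e).ne_zero
  have hdeg (i : ι) : ∑ k, f k i = ∑ k, f k i₀ := by
    have := natDegree_eq_of_natDegree_sub_eq hι₃ (fun i => monic_linProd l (f · i))
      (fun i j hij => by rw [hF i j hij, natDegree_C_mul_of_isUnit (hl hij)]) i i₀
    simpa only [natDegree_linProd] using this
  have hm : ∑ k, f k i₀ ≠ 0 := by
    intro hm
    have hzero (i : ι) : (f · i) = 0 := by
      funext k
      exact Finset.sum_eq_zero_iff.mp ((hdeg i).trans hm) k (Finset.mem_univ k)
    exact hsub_ne i₁ i₀ hi₁ (by rw [hzero, hzero, sub_self])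
  obtain ⟨σ, hσ⟩ := exists_perm_of_sum_eq (f := f) hm
    (fun k i j hki hkj => by_contra fun hij => hkj (exponent_eq_zero_of_ne hF hl he hij hki)) hdeg
  refine ⟨funext fun k => by_contra fun hk => hm ?_, σ, _, hσ⟩
  obtain ⟨i, hi⟩ := he k hk
  have := exponent_eq_zero_of_ne_zero hF hl hk hi (σ.symm k)
  rwa [hσ, if_pos (σ.apply_symm_apply k).symm] at this

end ExponentPattern

lemma exists_eq_natCast_sub_natCast {κ ι : Type*} [Fintype ι] (β : κ → ι → ℤ) :
    ∃ (f : κ → ι → ℕ) (e : κ → ℕ),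
      (∀ k i, β k i = f k i - e k) ∧ ∀ k, e k ≠ 0 → ∃ i, f k i = 0 := by
  classical
  let e k := Finset.univ.sup fun i => (-β k i).toNat
  have hle (k : κ) (i : ι) : -β k i ≤ e k := (Int.self_le_toNat _).trans
    (Int.ofNat_le.mpr (Finset.le_sup (f := fun i => (-β k i).toNat) (Finset.mem_univ i)))
  refine ⟨fun k i => (β k i + e k).toNat, e, fun k i => ?_, fun k hk => ?_⟩
  · rw [Int.toNat_of_nonneg (by linarith [hle k i])]
    ring
  · rcases (Finset.univ : Finset ι).eq_empty_or_nonempty with hι | hι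
    · simp [e, hι] at hk
    obtain ⟨i, -, hi⟩ := Finset.exists_mem_eq_sup Finset.univ hι fun i => (-β k i).toNat
    have hei : e k = (-β k i).toNat := hi
    refine ⟨i, ?_⟩
    simp only [hei] at hk ⊢
    omega

section PermGL

variable (R : Type*) {ι : Type*} [Semiring R] [Fintype ι] [DecidableEq ι]

def permGL : Equiv.Perm ι →* Matrix.GeneralLinearGroup ι R :=
  (Matrix.permMatrixHom (R := R)).toHomUnits

variable {R}

lemma permGL_apply (σ : Equiv.Perm ι) (k i : ι) :
    (permGL R σ : Matrix ι ι R) k i = if k = σ i then 1 else 0 := by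
  simp [permGL, PEquiv.toMatrix_apply, Equiv.symm_apply_eq]

lemma permGL_injective [Nontrivial R] : Function.Injective (permGL R (ι := ι)) := by
  intro σ τ h
  ext i
  have := congrArg (fun β : Matrix.GeneralLinearGroup ι R => (β : Matrix ι ι R) (σ i) i) h
  by_contra hi
  simp [permGL_apply, hi] at this

end PermGL

section Localization

variable {q d : ℕ} {l : Fin (d-1) → ZMod q}

lemma monic_of_mem_dlSub {p : (ZMod q)[X]} (hp : p ∈ dlSub q d l) : p.Monic := by
  induction hp using Submonoid.closure_induction with
  | mem p hp => obtain ⟨i, rfl⟩ := hp; exact monic_X_add_C _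
  | one => exact monic_one
  | mul p r _ _ hp hr => exact hp.mul hr

lemma algebraMap_injective_Rd : Function.Injective (algebraMap (ZMod q)[X] (Rd q d l)) :=
  IsLocalization.injective (M := dlSub q d l) (Rd q d l) fun _ hp =>
    (monic_of_mem_dlSub hp).mem_nonZeroDivisors

lemma val_tU (i : Fin (d-1)) :
    (tU q d l i : Rd q d l) = algebraMap (ZMod q)[X] (Rd q d l) (X + C (l i)) :=
  IsUnit.unit_spec _

lemma monU_add (v w : Fin (d-1) → ℤ) : monU q d l (v + w) = monU q d l v * monU q d l w := by
  simp only [monU, Pi.add_apply, zpow_add, Finset.prod_mul_distrib]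

lemma val_monU_natCast (v : Fin (d-1) → ℕ) :
    (monU q d l (fun k => v k) : Rd q d l) = algebraMap (ZMod q)[X] (Rd q d l) (linProd l v) := by
  simp [monU, linProd, val_tU]

lemma exists_linProd_identity_of_kCond {β : Matrix (Fin (d-1)) (Fin (d-1)) ℤ}
    (hβ : kCond q d l β) :
    ∃ (f : Fin (d-1) → Fin (d-1) → ℕ) (e : Fin (d-1) → ℕ),
      (∀ k i, β k i = f k i - e k) ∧ (∀ k, e k ≠ 0 → ∃ i, f k i = 0) ∧
      ∀ i j, i ≠ j → linProd l (f · i) - linProd l (f · j) = C (l i - l j) * linProd l e := by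
  obtain ⟨f, e, hfe, he⟩ := exists_eq_natCast_sub_natCast β
  refine ⟨f, e, hfe, he, fun i j hij => algebraMap_injective_Rd (l := l) ?_⟩
  have hcol (i : Fin (d-1)) : (monU q d l (fun k => f k i) : Rd q d l)
      = monU q d l (fun k => β k i) * monU q d l (fun k => e k) := by
    rw [← Units.val_mul, ← monU_add]
    congr 2
    funext k
    simp [hfe]
  have := hβ i j hij
  simp only [map_sub, map_mul, ← val_monU_natCast, hcol] at this ⊢
  linear_combination (monU q d l (fun k => e k) : Rd q d l) * this

lemma monU_permGL_col (σ : Equiv.Perm (Fin (d-1))) (i : Fin (d-1)) :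
    monU q d l (fun k => (permGL ℤ σ : Matrix (Fin (d-1)) (Fin (d-1)) ℤ) k i) = tU q d l (σ i) := by
  simp [monU, permGL_apply]

lemma kCond_permGL_iff (σ : Equiv.Perm (Fin (d-1))) :
    kCond q d l (permGL ℤ σ) ↔ ∀ i j, i ≠ j → l (σ i) - l (σ j) = l i - l j := by
  simp only [kCond, monU_permGL_col, val_tU]
  refine forall₂_congr fun i j => imp_congr_right fun _ => ?_
  rw [← map_add, ← map_sub, map_eq_zero_iff _ algebraMap_injective_Rd,
    show C (l j - l i) + (X + C (l (σ i))) - (X + C (l (σ j)))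
      = C (l j - l i + l (σ i) - l (σ j)) by simp only [C_add, C_sub]; ring, C_eq_zero]
  constructor <;> intro h <;> linear_combination h

lemma exists_eq_permGL_of_kCond (hq : 2 ≤ q) (hd : 3 < d)
    (hl : ∀ i j : Fin (d-1), i ≠ j → IsUnit (l i - l j))
    {β : Matrix.GeneralLinearGroup (Fin (d-1)) ℤ} (hβ : kCond q d l β) :
    ∃ σ, β = permGL ℤ σ := by
  have : Nontrivial (ZMod q) := ZMod.nontrivial_iff.mpr (by omega)
  obtain ⟨f, e, hfe, he, hF⟩ := exists_linProd_identity_of_kCond hβ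
  obtain ⟨rfl, σ, m, hσ⟩ := linProd_exponents_eq_perm hF hl (by simp; omega) he
  have hβσ : (β : Matrix (Fin (d-1)) (Fin (d-1)) ℤ) = (m : ℤ) • (permGL ℤ σ : Matrix _ _ ℤ) := by
    ext k i
    rw [hfe, hσ, Matrix.smul_apply, permGL_apply]
    split_ifs <;> simp
  have hm : IsUnit ((m : ℤ) ^ (d - 1)) := by
    have hdet := Matrix.isUnits_det_units β
    rw [hβσ, Matrix.det_smul, Fintype.card_fin] at hdet
    exact (IsUnit.mul_iff.mp hdet).1
  obtain rfl : m = 1 := by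
    simpa [isUnit_pow_iff (show d - 1 ≠ 0 by omega), Int.ofNat_isUnit] using hm
  exact ⟨σ, Units.ext (by simpa using hβσ)⟩

end Localization

lemma Nat.prime_of_forall_isUnit_zmod {q : ℕ} (hq : 2 ≤ q) (h : ∀ x : ZMod q, x ≠ 0 → IsUnit x) :
    q.Prime := by
  have : Nontrivial (ZMod q) := ZMod.nontrivial_iff.mpr (by omega)
  let : Field (ZMod q) := IsField.toField
    ⟨exists_pair_ne _, mul_comm, fun hx => (h _ hx).exists_right_inv⟩
  exact CharP.char_is_prime_of_two_le (ZMod q) q hq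

lemma injective_of_pairwise_isUnit_sub {ι R : Type*} [Ring R] [Nontrivial R] {l : ι → R}
    (hl : Pairwise fun i j => IsUnit (l i - l j)) : Function.Injective l :=
  fun _ _ hij => by_contra fun hne => (hl hne).ne_zero (sub_eq_zero.mpr hij)

section Translation

open Function

variable {ι : Type*} {q : ℕ} {l : ι → ZMod q} {σ : Equiv.Perm ι} {c : ZMod q}

lemma Function.Semiconj.perm_pow (h : Semiconj l σ (· + c)) (n : ℕ) :
    Semiconj l ⇑(σ ^ n) (· + n • c) := by
  rw [← Equiv.Perm.iterate_eq_pow, ← add_right_iterate]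
  exact h.iterate_right n

lemma Equiv.Perm.eq_of_semiconj (hl : Injective l) {τ : Equiv.Perm ι} {g : ZMod q → ZMod q}
    (hσ : Semiconj l σ g) (hτ : Semiconj l τ g) : σ = τ :=
  Equiv.ext fun i => hl ((hσ i).trans (hτ i).symm)

lemma Function.Semiconj.apply_ne (h : Semiconj l σ (· + c)) (hc : c ≠ 0) (i : ι) : σ i ≠ i :=
  fun hi => hc (by simpa [hi] using h i)

lemma Function.Semiconj.card_support [Fintype ι] [DecidableEq ι] (h : Semiconj l σ (· + c))
    (hc : c ≠ 0) : σ.support.card = Fintype.card ι := by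
  rw [Finset.eq_univ_of_forall fun i => Equiv.Perm.mem_support.mpr (h.apply_ne hc i),
    Finset.card_univ]

lemma exists_semiconj_add (hl : Bijective l) (c : ZMod q) :
    ∃ σ : Equiv.Perm ι, Semiconj l σ (· + c) := by
  let e := Equiv.ofBijective l hl
  exact ⟨e.trans ((Equiv.addRight c).trans e.symm),
    fun i => by simp [e, Equiv.ofBijective_apply_symm_apply]⟩

variable (hl : Pairwise fun i j => IsUnit (l i - l j)) (hσ : Semiconj l σ (· + c)) (hc : c ≠ 0)
include hl hσ hc

lemma Function.Semiconj.surjective [NeZero q] [Nonempty ι] : Surjective l := by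
  obtain ⟨i₀⟩ := ‹Nonempty ι›
  have hcu : IsUnit c := by simpa [hσ i₀] using hl (hσ.apply_ne hc i₀)
  intro x
  refine ⟨(σ ^ ((x - l i₀) * hcu.unit⁻¹ : ZMod q).val) i₀, ?_⟩
  rw [hσ.perm_pow _ i₀, nsmul_eq_mul, ZMod.natCast_zmod_val, mul_assoc, IsUnit.val_inv_mul,
    mul_one]
  exact add_sub_cancel (l i₀) x

lemma Function.Semiconj.card_eq [Fintype ι] [Nonempty ι] (hq : 2 ≤ q) : Fintype.card ι = q := by
  have : NeZero q := ⟨by omega⟩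
  have : Nontrivial (ZMod q) := ZMod.nontrivial_iff.mpr (by omega)
  rw [Fintype.card_of_bijective ⟨injective_of_pairwise_isUnit_sub hl, hσ.surjective hl hc⟩,
    ZMod.card]

lemma Function.Semiconj.prime (hq : 2 ≤ q) {i₀ : ι} (hl0 : l i₀ = 0) : q.Prime := by
  have : NeZero q := ⟨by omega⟩
  have : Nonempty ι := ⟨i₀⟩
  refine Nat.prime_of_forall_isUnit_zmod hq fun x hx => ?_
  obtain ⟨i, rfl⟩ := hσ.surjective hl hc x
  simpa [hl0] using hl (show i ≠ i₀ by rintro rfl; exact hx hl0)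

variable [Fact q.Prime] [Nonempty ι]

lemma Function.Semiconj.orderOf_eq : orderOf σ = q := by
  obtain ⟨i₀⟩ := ‹Nonempty ι›
  refine orderOf_eq_prime ?_ fun h => hσ.apply_ne hc i₀ (by rw [h]; rfl)
  refine Equiv.Perm.eq_of_semiconj (injective_of_pairwise_isUnit_sub hl) (hσ.perm_pow q) ?_
  intro i
  simp

lemma Function.Semiconj.isCycle [Fintype ι] : σ.IsCycle := by
  have hp : q.Prime := Fact.out
  refine Equiv.Perm.isCycle_of_prime_order' (by rwa [hσ.orderOf_eq hl hc]) ?_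
  rw [hσ.orderOf_eq hl hc, hσ.card_eq hl hc hp.two_le]
  linarith [hp.pos]

end Translation

lemma Set.ncard_setOf_eq_pow {G : Type*} [LeftCancelMonoid G] (a : G) :
    {b | ∃ m : ℕ, b = a ^ m}.ncard = orderOf a := by
  rw [← Nat.card_submonoidPowers, ← Nat.card_coe_set_eq]
  congr! 2
  ext b
  simp [Submonoid.mem_powers_iff, eq_comm]

lemma Fin.val_eq_add_one_mod_iff {n : ℕ} (k i : Fin n) :
    (k : ℕ) = ((i : ℕ) + 1) % n ↔ ((k : ℕ) : ZMod n) = ((i : ℕ) : ZMod n) + 1 := by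
  rw [← Nat.cast_succ, ZMod.natCast_eq_natCast_iff', Nat.mod_eq_of_lt k.isLt]

section KSet

open Function

variable {q d : ℕ} {l : Fin (d-1) → ZMod q}

lemma kCond_permGL_of_semiconj {σ : Equiv.Perm (Fin (d-1))} {c : ZMod q}
    (hσ : Semiconj l σ (· + c)) : kCond q d l (permGL ℤ σ) :=
  (kCond_permGL_iff σ).mpr fun i j _ => by simp only [hσ i, hσ j]; ring

variable (hd : 3 < d) (hl : ∀ i j : Fin (d-1), i ≠ j → IsUnit (l i - l j))
include hd hl

theorem mem_kSet_iff (hq : 2 ≤ q) {β : Matrix.GeneralLinearGroup (Fin (d-1)) ℤ} :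
    β ∈ kSet q d l ↔
      ∃ (σ : Equiv.Perm (Fin (d-1))) (c : ZMod q), Semiconj l σ (· + c) ∧ β = permGL ℤ σ := by
  constructor
  · rintro ⟨hβ, -⟩
    obtain ⟨σ, rfl⟩ := exists_eq_permGL_of_kCond hq hd hl hβ
    have hdiff := (kCond_permGL_iff σ).mp hβ
    let i₀ : Fin (d-1) := ⟨0, by omega⟩
    refine ⟨σ, l (σ i₀) - l i₀, fun i => ?_, rfl⟩
    obtain rfl | hi := eq_or_ne i i₀
    · ring
    · linear_combination hdiff i i₀ hi
  · rintro ⟨σ, c, hσ, rfl⟩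
    have hσ_inv : Semiconj l ⇑σ⁻¹ (· + -c) :=
      hσ.inverses_right σ.apply_symm_apply fun x => add_neg_cancel_right x c
    exact ⟨kCond_permGL_of_semiconj hσ, by rw [← map_inv]; exact kCond_permGL_of_semiconj hσ_inv⟩

lemma exists_semiconj_of_mem_kSet (hq : 2 ≤ q) {β : Matrix.GeneralLinearGroup (Fin (d-1)) ℤ}
    (hβ : β ∈ kSet q d l) (hβ1 : β ≠ 1) :
    ∃ (σ : Equiv.Perm (Fin (d-1))) (c : ZMod q),
      Semiconj l σ (· + c) ∧ c ≠ 0 ∧ β = permGL ℤ σ := by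
  have : Nontrivial (ZMod q) := ZMod.nontrivial_iff.mpr (by omega)
  obtain ⟨σ, c, hσ, rfl⟩ := (mem_kSet_iff hd hl hq).mp hβ
  refine ⟨σ, c, hσ, ?_, rfl⟩
  rintro rfl
  refine hβ1 ?_
  rw [Equiv.Perm.eq_of_semiconj (injective_of_pairwise_isUnit_sub hl) hσ
    (fun i => (add_zero _).symm : Semiconj l ⇑(1 : Equiv.Perm (Fin (d-1))) (· + 0)), map_one]

variable [Fact q.Prime] {σ : Equiv.Perm (Fin (d-1))} {c : ZMod q} (hσ : Semiconj l σ (· + c))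
  (hc : c ≠ 0)
include hσ hc

theorem kSet_eq_powers : kSet q d l = {β | ∃ m : ℕ, β = permGL ℤ σ ^ m} := by
  ext β
  rw [mem_kSet_iff hd hl (Fact.out : q.Prime).two_le]
  constructor
  · rintro ⟨τ, c', hτ, rfl⟩
    have hστ := hσ.perm_pow (c' / c).val
    rw [nsmul_eq_mul, ZMod.natCast_zmod_val, div_mul_cancel₀ _ hc] at hστ
    exact ⟨(c' / c).val,
      by rw [← map_pow, Equiv.Perm.eq_of_semiconj (injective_of_pairwise_isUnit_sub hl) hτ hστ]⟩
  · rintro ⟨m, rfl⟩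
    exact ⟨σ ^ m, m • c, hσ.perm_pow m, (map_pow _ _ _).symm⟩

theorem orderOf_permGL_eq : orderOf (permGL ℤ σ) = q := by
  have : Nonempty (Fin (d-1)) := ⟨⟨0, by omega⟩⟩
  rw [orderOf_injective _ permGL_injective, hσ.orderOf_eq hl hc]

end KSet

/-- Theorem 3.3 (case `d > 3`).  If the group `𝒦` of matrices `β ∈ GL_{d-1}(ℤ)`
satisfying the defining identities (for `β` and `β⁻¹`) is nontrivial, then `q = d-1` is
prime, every nontrivial element of `𝒦` is a permutation matrix whose permutation is a
single cycle of length `d-1`, and `𝒦` is cyclic of order `d-1`.  Moreover, when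
`q = d-1` is prime and `l_i = i-1` (i.e. `l i = i` in our `0`-indexed notation), `𝒦` is
the cyclic group of order `d-1` generated by the permutation matrix `(b_{i,j})` with
`b_{i+1,i} = 1` (indices mod `d-1`) and all other entries `0`. -/
theorem statement6 (q d : ℕ) (hq : 2 ≤ q) (hd : 3 < d) (l : Fin (d-1) → ZMod q)
    (hl0 : l ⟨0, by omega⟩ = 0)
    (hl : ∀ i j : Fin (d-1), i ≠ j → IsUnit (l i - l j)) :
    ((∃ β ∈ kSet q d l, β ≠ 1) →
      q = d - 1 ∧ q.Prime ∧
      (∀ β ∈ kSet q d l, β ≠ 1 →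
        ∃ σ : Equiv.Perm (Fin (d-1)), σ.IsCycle ∧ σ.support.card = d - 1 ∧
          ∀ k i : Fin (d-1),
            (β : Matrix (Fin (d-1)) (Fin (d-1)) ℤ) k i = if k = σ i then 1 else 0) ∧
      (∃ β₀ ∈ kSet q d l,
        kSet q d l = {β | ∃ m : ℕ, β = β₀ ^ m} ∧ (kSet q d l).ncard = d - 1)) ∧
    (q = d - 1 → q.Prime → (∀ i : Fin (d-1), l i = (i : ZMod q)) →
      ∃ P : Matrix.GeneralLinearGroup (Fin (d-1)) ℤ,
        (∀ k i : Fin (d-1),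
          (P : Matrix (Fin (d-1)) (Fin (d-1)) ℤ) k i
            = if (k : ℕ) = ((i : ℕ) + 1) % (d-1) then 1 else 0) ∧
        orderOf P = d - 1 ∧
        kSet q d l = {β | ∃ m : ℕ, β = P ^ m}) := by
  have : Nonempty (Fin (d-1)) := ⟨⟨0, by omega⟩⟩
  have : Nontrivial (ZMod q) := ZMod.nontrivial_iff.mpr (by omega)
  refine ⟨fun ⟨β, hβ, hβ1⟩ => ?_, fun hqd hp hli => ?_⟩
  · obtain ⟨σ, c, hσ, hc, rfl⟩ := exists_semiconj_of_mem_kSet hd hl hq hβ hβ1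
    have hqd : q = d - 1 := by simpa using (hσ.card_eq hl hc hq).symm
    have : Fact q.Prime := ⟨hσ.prime hl hc hq hl0⟩
    refine ⟨hqd, Fact.out, fun β' hβ' hβ'1 => ?_, permGL ℤ σ, hβ, kSet_eq_powers hd hl hσ hc, ?_⟩
    · obtain ⟨τ, c', hτ, hc', rfl⟩ := exists_semiconj_of_mem_kSet hd hl hq hβ' hβ'1
      exact ⟨τ, hτ.isCycle hl hc', by rw [hτ.card_support hc', Fintype.card_fin], permGL_apply τ⟩
    · rw [kSet_eq_powers hd hl hσ hc, Set.ncard_setOf_eq_pow, orderOf_permGL_eq hd hl hσ hc, hqd]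
  · subst hqd
    have : Fact (d - 1).Prime := ⟨hp⟩
    have hbij : Function.Bijective l := (Fintype.bijective_iff_injective_and_card l).mpr
      ⟨injective_of_pairwise_isUnit_sub hl, by simp⟩
    obtain ⟨σ, hσ⟩ := exists_semiconj_add hbij 1
    refine ⟨permGL ℤ σ, fun k i => ?_, orderOf_permGL_eq hd hl hσ one_ne_zero,
      kSet_eq_powers hd hl hσ one_ne_zero⟩
    rw [permGL_apply]
    congr 1
    rw [Fin.val_eq_add_one_mod_iff, ← hli, ← hli, show l i + 1 = l (σ i) from (hσ i).symm,
      (injective_of_pairwise_isUnit_sub hl).eq_iff]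
end

section
/- Let d ≥ 3, q ≥ 2, and l_1 = 0, l_2, …, l_{d−1} ∈ ℤ_q with l_i − l_j a unit whenever i ≠ j. Let β = (b_{i,j}) ∈ GL_{d−1}(ℤ) satisfy, for all 1 ≤ i ≠ j ≤ d−1, the identity (l_j − l_i) + ∏_{k=1}^{d−1}(t+l_k)^{b_{k,i}} − ∏_{m=1}^{d−1}(t+l_m)^{b_{m,j}} = 0 in R_d(ℤ_q). For 1 ≤ i ≤ d−1 let C(i) = Σ_{k=1}^{d−1} b_{k,i} be the i-th column sum of β. Then: (1) C(i) < 0 for at most one index i; (2) C(i) = 0 for at most one index i; and (3) if C(i) > 0 for some i, then C(j) = C(i) for every j with 1 ≤ j ≤ d−1. -/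
/-!
Expand at `t = ∞`: sending `t ↦ T⁻¹` maps `R_d(ℤ_q)` into Laurent series in `T`, and there
`t + l_k = T⁻¹ (1 + l_k T)`, so `∏_k (t + l_k)^(b_k) = T^(-C) (1 + O(T))` with `C = ∑_k b_k`.
In `(l_j - l_i) + T^(-C(i)) (1 + O(T)) - T^(-C(j)) (1 + O(T)) = 0` the lowest-order terms must
cancel; since `l_j - l_i ≠ 0`, either `C(i) = C(j) > 0`, or one of `C(i)`, `C(j)` is zero and the
other negative. All three claims follow from this dichotomy for pairs of columns.
-/

open Polynomial

namespace LaurentSeries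

open HahnSeries

variable {R : Type*} [CommRing R]

def IsMonicOfOrder (x : LaurentSeries R) (n : ℤ) : Prop :=
  x.coeff n = 1 ∧ ∀ k < n, x.coeff k = 0

theorem isMonicOfOrder_single_mul_ofPowerSeries (n : ℤ) {w : PowerSeries R}
    (hw : PowerSeries.constantCoeff w = 1) :
    IsMonicOfOrder (single n 1 * ofPowerSeries ℤ R w) n := by
  refine ⟨?_, fun k hk => ?_⟩
  · have h := coeff_single_mul_add (r := (1 : R)) (x := ofPowerSeries ℤ R w) (a := 0) (b := n)
    rw [zero_add, one_mul] at h
    rw [h, ← Nat.cast_zero, ofPowerSeries_apply_coeff, PowerSeries.coeff_zero_eq_constantCoeff,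
      hw]
  · have h :=
      coeff_single_mul_add (r := (1 : R)) (x := ofPowerSeries ℤ R w) (a := k - n) (b := n)
    rw [sub_add_cancel, one_mul] at h
    rw [h, ofPowerSeries_apply, embDomain_of_notMem_range]
    rintro ⟨m, hm⟩
    simp only [Nat.castOrderEmbedding_apply] at hm
    omega

theorem IsMonicOfOrder.order_cases [Nontrivial R] {x y : LaurentSeries R} {m n : ℤ}
    (hx : IsMonicOfOrder x m) (hy : IsMonicOfOrder y n) {c : R} (hc : c ≠ 0)
    (h : HahnSeries.C c + x = y) :
    (m = n ∧ m < 0) ∨ (m = 0 ∧ 0 < n) ∨ (n = 0 ∧ 0 < m) := by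
  have hcoeff (k : ℤ) : (single 0 c).coeff k + x.coeff k = y.coeff k := by
    rw [← h, C_apply, HahnSeries.coeff_add]
  rcases lt_trichotomy m n with hmn | rfl | hmn
  · have hm := hcoeff m
    rw [hx.1, hy.2 m hmn] at hm
    by_cases hm0 : m = 0
    · omega
    · rw [coeff_single_of_ne hm0, zero_add] at hm
      exact absurd hm one_ne_zero
  · refine Or.inl ⟨rfl, lt_of_not_ge fun hm => hc ?_⟩
    have h0 := hcoeff 0
    rw [coeff_single_same] at h0
    rcases hm.eq_or_lt with rfl | hm
    · simpa [hx.1, hy.1] using h0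
    · simpa [hx.2 0 hm, hy.2 0 hm] using h0
  · have hn := hcoeff n
    rw [hx.2 n hmn, hy.1, add_zero] at hn
    by_cases hn0 : n = 0
    · omega
    · rw [coeff_single_of_ne hn0] at hn
      exact absurd hn zero_ne_one

noncomputable def singleUnitsHom : Multiplicative ℤ →* (LaurentSeries R)ˣ :=
  MonoidHom.toHomUnits
    { toFun := fun n => single n.toAdd 1
      map_one' := single_zero_one
      map_mul' := fun a b => by simp [single_mul_single] }

@[simp]
theorem val_singleUnitsHom (n : Multiplicative ℤ) :
    (singleUnitsHom (R := R) n : LaurentSeries R) = single n.toAdd 1 :=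
  rfl

noncomputable def oneAddCMulXUnit (r : R) : (PowerSeries R)ˣ :=
  (PowerSeries.isUnit_iff_constantCoeff.mpr (by simp) :
    IsUnit (1 + PowerSeries.C r * PowerSeries.X)).unit

theorem units_map_constantCoeff_oneAddCMulXUnit (r : R) :
    Units.map (PowerSeries.constantCoeff (R := R) : PowerSeries R →* R) (oneAddCMulXUnit r) =
      1 := by
  ext1
  simp [oneAddCMulXUnit]

noncomputable def evalInvX : R[X] →+* LaurentSeries R :=
  eval₂RingHom HahnSeries.C (single (-1) 1)

theorem evalInvX_X_add_C (r : R) :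
    evalInvX (R := R) (X + Polynomial.C r) =
      ↑(singleUnitsHom (R := R) (Multiplicative.ofAdd (-1)) *
        Units.map (ofPowerSeries ℤ R : PowerSeries R →* LaurentSeries R) (oneAddCMulXUnit r)) := by
  rw [Units.val_mul, val_singleUnitsHom, toAdd_ofAdd, Units.coe_map, oneAddCMulXUnit,
    IsUnit.unit_spec]
  simp [evalInvX, mul_add, C_apply, single_mul_single]

end LaurentSeries

open LaurentSeries

namespace Rd

noncomputable def toLaurentSeries (q d : ℕ) (l : Fin (d-1) → ZMod q) :
    Rd q d l →+* LaurentSeries (ZMod q) :=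
  IsLocalization.lift (M := dlSub q d l) (g := evalInvX) fun y =>
    (Submonoid.closure_le (S := (IsUnit.submonoid _).comap evalInvX.toMonoidHom)).mpr
      (by
        rintro _ ⟨i, rfl⟩
        change IsUnit (evalInvX _)
        exact evalInvX_X_add_C (l i) ▸ Units.isUnit _) y.2

variable (q d : ℕ) (l : Fin (d-1) → ZMod q)

theorem toLaurentSeries_algebraMap (p : (ZMod q)[X]) :
    toLaurentSeries q d l (algebraMap _ _ p) = evalInvX p :=
  IsLocalization.lift_eq _ _

theorem units_map_toLaurentSeries_tU (i : Fin (d-1)) :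
    Units.map (toLaurentSeries q d l : Rd q d l →* LaurentSeries (ZMod q)) (tU q d l i) =
      singleUnitsHom (Multiplicative.ofAdd (-1)) *
        Units.map (HahnSeries.ofPowerSeries ℤ (ZMod q) : PowerSeries (ZMod q) →* _)
          (oneAddCMulXUnit (l i)) := by
  ext1
  rw [Units.coe_map, tU, IsUnit.unit_spec]
  exact (toLaurentSeries_algebraMap q d l _).trans (evalInvX_X_add_C (l i))

theorem isMonicOfOrder_toLaurentSeries_monU (v : Fin (d-1) → ℤ) :
    IsMonicOfOrder (toLaurentSeries q d l (monU q d l v)) (-∑ i, v i) := by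
  set w := ∏ i, oneAddCMulXUnit (l i) ^ v i
  have hmap :
      Units.map (toLaurentSeries q d l : Rd q d l →* LaurentSeries (ZMod q)) (monU q d l v) =
      singleUnitsHom (Multiplicative.ofAdd (-∑ i, v i)) *
        Units.map (HahnSeries.ofPowerSeries ℤ (ZMod q) : PowerSeries (ZMod q) →* _) w := by
    simp only [monU, w, map_prod, map_zpow, units_map_toLaurentSeries_tU, mul_zpow,
      Finset.prod_mul_distrib]
    rw [← Finset.prod_congr rfl fun i _ => map_zpow _ _ _, ← map_prod]
    simp [← ofAdd_zsmul, ← ofAdd_sum]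
  have hw : PowerSeries.constantCoeff (w : PowerSeries (ZMod q)) = 1 := by
    have : Units.map (PowerSeries.constantCoeff (R := ZMod q) : PowerSeries (ZMod q) →* ZMod q)
        w = 1 := by
      simp [w, units_map_constantCoeff_oneAddCMulXUnit]
    simpa using congrArg Units.val this
  convert isMonicOfOrder_single_mul_ofPowerSeries _ hw using 1
  exact congrArg Units.val hmap

theorem colSum_cases_of_kCond {β : Matrix (Fin (d-1)) (Fin (d-1)) ℤ} (hβ : kCond q d l β)
    {i j : Fin (d-1)} (hij : i ≠ j) (hl : l j ≠ l i) :
    (∑ k, β k i = ∑ k, β k j ∧ 0 < ∑ k, β k i) ∨ (∑ k, β k i = 0 ∧ ∑ k, β k j < 0) ∨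
      (∑ k, β k j = 0 ∧ ∑ k, β k i < 0) := by
  have := nontrivial_of_ne _ _ hl
  have h := congrArg (toLaurentSeries q d l) (hβ i j hij)
  rw [map_sub, map_add, toLaurentSeries_algebraMap, map_zero, sub_eq_zero] at h
  have := (isMonicOfOrder_toLaurentSeries_monU q d l (β · i)).order_cases
    (isMonicOfOrder_toLaurentSeries_monU q d l (β · j)) (sub_ne_zero.mpr hl)
    (by simpa [evalInvX] using h)
  omega

end Rd

/-- Lemma 3.4 (column sums).  If `β ∈ GL_{d-1}(ℤ)` satisfies the identities
`(l_j - l_i) + ∏_k (t+l_k)^(b_{k,i}) - ∏_k (t+l_k)^(b_{k,j}) = 0` in `R_d(ℤ_q)` for all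
`i ≠ j`, and `C i` denotes the `i`-th column sum of `β`, then at most one column sum is
negative, at most one column sum is zero, and if some column sum is positive then all
column sums are equal to it. -/
theorem statement8 (q d : ℕ) (hq : 2 ≤ q) (l : Fin (d-1) → ZMod q)
    (hl : ∀ i j : Fin (d-1), i ≠ j → IsUnit (l i - l j))
    (β : Matrix.GeneralLinearGroup (Fin (d-1)) ℤ)
    (hβ : kCond q d l ↑β) :
    (∀ i i' : Fin (d-1),
        (∑ k, (β : Matrix (Fin (d-1)) (Fin (d-1)) ℤ) k i) < 0 →
        (∑ k, (β : Matrix (Fin (d-1)) (Fin (d-1)) ℤ) k i') < 0 → i = i') ∧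
    (∀ i i' : Fin (d-1),
        (∑ k, (β : Matrix (Fin (d-1)) (Fin (d-1)) ℤ) k i) = 0 →
        (∑ k, (β : Matrix (Fin (d-1)) (Fin (d-1)) ℤ) k i') = 0 → i = i') ∧
    (∀ i : Fin (d-1), 0 < (∑ k, (β : Matrix (Fin (d-1)) (Fin (d-1)) ℤ) k i) →
        ∀ j : Fin (d-1),
          (∑ k, (β : Matrix (Fin (d-1)) (Fin (d-1)) ℤ) k j)
            = ∑ k, (β : Matrix (Fin (d-1)) (Fin (d-1)) ℤ) k i) := by
  have : Fact (1 < q) := ⟨hq⟩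
  have cases {i j : Fin (d-1)} (hij : i ≠ j) :=
    Rd.colSum_cases_of_kCond q d l hβ hij (sub_ne_zero.mp (hl j i hij.symm).ne_zero)
  refine ⟨fun i i' hi hi' => ?_, fun i i' hi hi' => ?_, fun i hi j => ?_⟩
  · by_contra hne
    rcases cases hne with h | h | h <;> omega
  · by_contra hne
    rcases cases hne with h | h | h <;> omega
  · obtain rfl | hji := eq_or_ne j i
    · rfl
    · rcases cases hji with h | h | h <;> omega
end

section
/- Let d ≥ 3, q ≥ 2, and l_1 = 0, l_2, …, l_{d−1} ∈ ℤ_q with l_i − l_j a unit whenever i ≠ j. Let β = (b_{i,j}) ∈ GL_{d−1}(ℤ) satisfy, for all 1 ≤ i ≠ j ≤ d−1, the identity (l_j − l_i) + ∏_{k=1}^{d−1}(t+l_k)^{b_{k,i}} − ∏_{m=1}^{d−1}(t+l_m)^{b_{m,j}} = 0 in R_d(ℤ_q). If b_{n,i} < 0 for some indices 1 ≤ n, i ≤ d−1, then b_{n,j} = −1 for every j with 1 ≤ j ≤ d−1, and b_{k,j} ≥ 0 for every k ≠ n and every j. -/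
open Polynomial

/-! Clearing denominators, the identity for columns `i ≠ j` becomes the polynomial identity
`(l_j - l_i) Φ_e + Φ_{e + β_i} = Φ_{e + β_j}` in `ℤ_q[t]`, where `Φ_w = ∏_k (t + l_k)^{w_k}` and
`e ≥ 0` is a shift making all exponents nonnegative. If `β_{r,i} < 0` and `β_{r,i} < β_{r,j}`, choose
`e` so that the `r`-th exponent of `e + β_i` is zero: evaluating at `t = -l_r` kills `Φ_e` and
`Φ_{e + β_j}` but not the unit `Φ_{e + β_i}(-l_r)`. Hence a row of `β` with a negative entry is
constant; its value divides `det β = ±1`, so it is `-1`, and two such rows would force `det β = 0`. -/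

section ProdXAddC

variable {R ι : Type*} [CommRing R] [Fintype ι] (l : ι → R)

noncomputable def prodXAddC (w : ι → ℕ) : R[X] :=
  ∏ k, (X + C (l k)) ^ w k

variable {l}

theorem eval_neg_prodXAddC (w : ι → ℕ) (r : ι) :
    (prodXAddC l w).eval (-l r) = ∏ k, (l k - l r) ^ w k := by
  simp only [prodXAddC, eval_prod, eval_pow, eval_add, eval_X, eval_C, neg_add_eq_sub]

theorem eval_neg_prodXAddC_eq_zero {w : ι → ℕ} {r : ι} (hw : w r ≠ 0) :
    (prodXAddC l w).eval (-l r) = 0 := by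
  rw [eval_neg_prodXAddC]
  exact Finset.prod_eq_zero (Finset.mem_univ r) (by rw [sub_self, zero_pow hw])

theorem isUnit_eval_neg_prodXAddC (hl : ∀ i j, i ≠ j → IsUnit (l i - l j))
    {w : ι → ℕ} {r : ι} (hw : w r = 0) : IsUnit ((prodXAddC l w).eval (-l r)) := by
  rw [eval_neg_prodXAddC, IsUnit.prod_iff]
  intro k _
  rcases eq_or_ne k r with rfl | hkr
  · simp [hw]
  · exact (hl k r hkr).pow _

end ProdXAddC

theorem Matrix.dvd_det_of_row_eq_const {R n : Type*} [CommRing R] [Fintype n] [DecidableEq n]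
    {M : Matrix n n R} {r : n} {c : R} (hr : ∀ j, M r j = c) : c ∣ M.det := by
  have hM : M = M.updateRow r (c • fun _ => 1) := by
    conv_lhs => rw [← M.updateRow_eq_self r]
    congr 1
    funext j
    simp [hr]
  rw [hM, Matrix.det_updateRow_smul]
  exact dvd_mul_right _ _

namespace Rd

variable {q d : ℕ} {l : Fin (d-1) → ZMod q}

theorem algebraMap_injective : Function.Injective (algebraMap (ZMod q)[X] (Rd q d l)) := by
  refine IsLocalization.injective (M := dlSub q d l) _ ?_
  rw [dlSub, Submonoid.closure_le]
  rintro p ⟨i, rfl⟩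
  exact (monic_X_add_C (l i)).mem_nonZeroDivisors

theorem coe_monU_natCast (w : Fin (d-1) → ℕ) :
    (monU q d l (fun k => (w k : ℤ)) : Rd q d l) = algebraMap _ _ (prodXAddC l w) := by
  simp only [monU, prodXAddC, Units.coe_prod, zpow_natCast, Units.val_pow_eq_pow_val, map_prod,
    map_pow, tU, IsUnit.unit_spec]

theorem monU_add (v w : Fin (d-1) → ℤ) : monU q d l (v + w) = monU q d l v * monU q d l w := by
  simp only [monU, Pi.add_apply, zpow_add, Finset.prod_mul_distrib]

theorem coe_monU_mul_algebraMap (v : Fin (d-1) → ℤ) {e a : Fin (d-1) → ℕ}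
    (ha : ∀ k, (a k : ℤ) = e k + v k) :
    (monU q d l v : Rd q d l) * algebraMap _ _ (prodXAddC l e) =
      algebraMap _ _ (prodXAddC l a) := by
  rw [← coe_monU_natCast, ← coe_monU_natCast, ← Units.val_mul, ← monU_add]
  congr 2
  funext k
  rw [ha, Pi.add_apply, add_comm]

end Rd

namespace kCond

variable {q d : ℕ} {l : Fin (d-1) → ZMod q} {β : Matrix (Fin (d-1)) (Fin (d-1)) ℤ}

theorem polynomial_identity (hβ : kCond q d l β) {i j : Fin (d-1)} (hij : i ≠ j)
    {e a b : Fin (d-1) → ℕ} (ha : ∀ k, (a k : ℤ) = e k + β k i)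
    (hb : ∀ k, (b k : ℤ) = e k + β k j) :
    C (l j - l i) * prodXAddC l e + prodXAddC l a = prodXAddC l b := by
  apply Rd.algebraMap_injective (d := d)
  have h := congrArg (· * algebraMap _ (Rd q d l) (prodXAddC l e)) (hβ i j hij)
  simp only [zero_mul, add_mul, sub_mul, Rd.coe_monU_mul_algebraMap _ ha,
    Rd.coe_monU_mul_algebraMap _ hb, sub_eq_zero] at h
  rwa [map_add, map_mul]

theorem le_of_neg [Nontrivial (ZMod q)] (hl : ∀ i j, i ≠ j → IsUnit (l i - l j))
    (hβ : kCond q d l β) {i j r : Fin (d-1)} (hij : i ≠ j) (hneg : β r i < 0) :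
    β r j ≤ β r i := by
  by_contra! hlt
  obtain ⟨e, he⟩ : ∃ e : Fin (d-1) → ℕ, ∀ k, (e k : ℤ) = max (max (-β k i) (-β k j)) 0 :=
    ⟨_, fun k => Int.toNat_eq_max _⟩
  obtain ⟨a, ha⟩ : ∃ a : Fin (d-1) → ℕ, ∀ k, (a k : ℤ) = e k + β k i :=
    ⟨fun k => (e k + β k i).toNat, fun k => Int.toNat_of_nonneg (by have := he k; omega)⟩
  obtain ⟨b, hb⟩ : ∃ b : Fin (d-1) → ℕ, ∀ k, (b k : ℤ) = e k + β k j :=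
    ⟨fun k => (e k + β k j).toNat, fun k => Int.toNat_of_nonneg (by have := he k; omega)⟩
  have key := congrArg (eval (-l r)) (hβ.polynomial_identity hij ha hb)
  have := he r
  have := ha r
  have := hb r
  have he_r : (prodXAddC l e).eval (-l r) = 0 := eval_neg_prodXAddC_eq_zero (by omega)
  have hb_r : (prodXAddC l b).eval (-l r) = 0 := eval_neg_prodXAddC_eq_zero (by omega)
  have ha_r : IsUnit ((prodXAddC l a).eval (-l r)) := isUnit_eval_neg_prodXAddC hl (by omega)
  rw [eval_add, eval_mul, he_r, hb_r, mul_zero, zero_add] at key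
  exact not_isUnit_zero (key ▸ ha_r)

theorem row_eq_of_neg [Nontrivial (ZMod q)] (hl : ∀ i j, i ≠ j → IsUnit (l i - l j))
    (hβ : kCond q d l β) {r i : Fin (d-1)} (hneg : β r i < 0) (j : Fin (d-1)) :
    β r j = β r i := by
  rcases eq_or_ne i j with rfl | hij
  · rfl
  have hji := hβ.le_of_neg hl hij hneg
  exact le_antisymm hji (hβ.le_of_neg hl hij.symm (hji.trans_lt hneg))

end kCond

/-- Lemma 3.5 (negative entries).  If `β ∈ GL_{d-1}(ℤ)` satisfies the identities
`(l_j - l_i) + ∏_k (t+l_k)^(b_{k,i}) - ∏_m (t+l_m)^(b_{m,j}) = 0` in `R_d(ℤ_q)` for all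
`i ≠ j`, and some entry `b_{n,i}` is negative, then every entry of row `n` equals `-1`
and all entries outside row `n` are nonnegative. -/
theorem statement9 (q d : ℕ) (hq : 2 ≤ q) (l : Fin (d-1) → ZMod q)
    (hl : ∀ i j : Fin (d-1), i ≠ j → IsUnit (l i - l j))
    (β : Matrix.GeneralLinearGroup (Fin (d-1)) ℤ)
    (hβ : kCond q d l ↑β)
    (n i : Fin (d-1))
    (hni : (β : Matrix (Fin (d-1)) (Fin (d-1)) ℤ) n i < 0) :
    (∀ j : Fin (d-1), (β : Matrix (Fin (d-1)) (Fin (d-1)) ℤ) n j = -1) ∧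
    (∀ (k : Fin (d-1)), k ≠ n →
      ∀ j : Fin (d-1), 0 ≤ (β : Matrix (Fin (d-1)) (Fin (d-1)) ℤ) k j) := by
  have : Fact (1 < q) := ⟨hq⟩
  set M : Matrix (Fin (d-1)) (Fin (d-1)) ℤ := ↑β
  have hdet : IsUnit M.det := β.isUnit.map Matrix.detMonoidHom
  have row_eq_neg_one : ∀ r j, M r j < 0 → ∀ j', M r j' = -1 := by
    intro r j hneg j'
    have hrow := hβ.row_eq_of_neg hl hneg
    rw [hrow j']
    rcases Int.isUnit_iff.mp (isUnit_of_dvd_unit (Matrix.dvd_det_of_row_eq_const hrow) hdet)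
      with h | h <;> omega
  refine ⟨row_eq_neg_one n i hni, fun k hk j => ?_⟩
  by_contra! hkj
  have hrows : M k = M n := funext fun j' => by rw [row_eq_neg_one k j hkj, row_eq_neg_one n i hni]
  exact not_isUnit_zero (Matrix.det_zero_of_row_eq hk hrows ▸ hdet)
end

section
/- Let B be a group, A a normal subgroup of B, and φ ∈ Aut(B) with φ(A) = A. Let φ' ∈ Aut(A) be the restriction of φ and let φ̄ be the induced automorphism of the quotient C = B/A. Then: (a) if φ̄ has infinitely many twisted conjugacy classes in C, then φ has infinitely many twisted conjugacy classes in B; (b) if φ' has infinitely many twisted conjugacy classes in A and the fixed subgroup Fix(φ̄) = {c ∈ C : φ̄(c) = c} is trivial, then φ has infinitely many twisted conjugacy classes in B. -/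
/-- The set of `φ`-twisted conjugacy classes of a group `G`: the orbits of the action
`g · x = g x φ(g)⁻¹` of `G` on itself. -/
def twistedConjClasses {G : Type*} [Group G] (φ : MulAut G) : Set (Set G) :=
  {S | ∃ x : G, S = {y | ∃ g : G, y = g * x * (φ g)⁻¹}}

/-- The `ψ`-twisted conjugacy class of `x`. -/
def tcCls {G : Type*} [Group G] (ψ : MulAut G) (x : G) : Set G :=
  {y | ∃ g : G, y = g * x * (ψ g)⁻¹}

lemma twistedConjClasses_eq_range {G : Type*} [Group G] (ψ : MulAut G) :
    twistedConjClasses ψ = Set.range (tcCls ψ) := by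
  ext S
  simp [twistedConjClasses, tcCls, Set.range, eq_comm]

lemma mem_tcCls_self {G : Type*} [Group G] (ψ : MulAut G) (x : G) : x ∈ tcCls ψ x :=
  ⟨1, by simp⟩

lemma tcCls_eq_of_mem {G : Type*} [Group G] (ψ : MulAut G) {x y : G}
    (h : y ∈ tcCls ψ x) : tcCls ψ y = tcCls ψ x := by
  obtain ⟨g, rfl⟩ := h
  ext z
  constructor
  · rintro ⟨h, rfl⟩
    exact ⟨h * g, by simp [map_mul, mul_inv_rev, mul_assoc]⟩
  · rintro ⟨k, rfl⟩
    refine ⟨k * g⁻¹, ?_⟩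
    simp [map_mul, map_inv, mul_inv_rev, mul_assoc]

/-- Lemma 4.1.  Let `A` be a normal subgroup of `B`, `φ` an automorphism of `B` with
`φ(A) = A`, `φ'` the restricted automorphism of `A` and `φ̄` the induced automorphism of
`C = B/A`.  (a) If `φ̄` has infinitely many twisted conjugacy classes then so does `φ`.
(b) If `φ'` has infinitely many twisted conjugacy classes and `Fix(φ̄)` is trivial, then
`φ` has infinitely many twisted conjugacy classes. -/
theorem statement14 {B : Type*} [Group B] (A : Subgroup B) [A.Normal]
    (φ : MulAut B) (hφA : A.map φ.toMonoidHom = A)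
    (φ' : MulAut A) (hφ' : ∀ a : A, (φ' a : B) = φ (a : B))
    (φbar : MulAut (B ⧸ A))
    (hφbar : ∀ b : B, φbar (QuotientGroup.mk b) = QuotientGroup.mk (φ b)) :
    ((twistedConjClasses φbar).Infinite → (twistedConjClasses φ).Infinite) ∧
    ((twistedConjClasses φ').Infinite → (∀ c : B ⧸ A, φbar c = c → c = 1) →
      (twistedConjClasses φ).Infinite) := by
  constructor
  · -- part (a)
    intro hinf
    by_contra hfin
    rw [Set.not_infinite] at hfin
    apply hinf
    have Fcls : ∀ x : B, (QuotientGroup.mk '' tcCls φ x : Set (B ⧸ A)) =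
        tcCls φbar (QuotientGroup.mk x) := by
      intro x
      ext c
      constructor
      · rintro ⟨y, ⟨g, rfl⟩, rfl⟩
        refine ⟨QuotientGroup.mk g, ?_⟩
        rw [hφbar]
        rfl
      · rintro ⟨h, rfl⟩
        obtain ⟨g, rfl⟩ := QuotientGroup.mk_surjective h
        refine ⟨g * x * (φ g)⁻¹, ⟨g, rfl⟩, ?_⟩
        rw [hφbar]
        rfl
    have hsub : twistedConjClasses φbar ⊆
        (fun S : Set B => (QuotientGroup.mk '' S : Set (B ⧸ A))) '' twistedConjClasses φ := by
      rintro S ⟨c, rfl⟩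
      obtain ⟨x, rfl⟩ := QuotientGroup.mk_surjective c
      refine ⟨tcCls φ x, ⟨x, rfl⟩, ?_⟩
      exact Fcls x
    exact (hfin.image _).subset hsub
  · -- part (b)
    intro hinf htriv
    -- the key step: if two elements of A are φ-twisted conjugate in B,
    -- they are φ'-twisted conjugate in A
    have key : ∀ a₁ a₂ : A, (a₂ : B) ∈ tcCls φ (a₁ : B) → a₂ ∈ tcCls φ' a₁ := by
      rintro a₁ a₂ ⟨g, hg⟩
      -- first show g ∈ A
      have hq : φbar (QuotientGroup.mk g) = QuotientGroup.mk g := by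
        have h1 : (QuotientGroup.mk (a₂ : B) : B ⧸ A) =
            QuotientGroup.mk g * QuotientGroup.mk (a₁ : B) * (φbar (QuotientGroup.mk g))⁻¹ := by
          rw [hφbar, hg]; rfl
        have ha1 : (QuotientGroup.mk (a₁ : B) : B ⧸ A) = 1 :=
          (QuotientGroup.eq_one_iff _).mpr a₁.2
        have ha2 : (QuotientGroup.mk (a₂ : B) : B ⧸ A) = 1 :=
          (QuotientGroup.eq_one_iff _).mpr a₂.2
        rw [ha1, ha2, mul_one] at h1
        have := h1.symm
        rw [mul_inv_eq_one] at this
        exact this.symm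
      have hgA : g ∈ A := (QuotientGroup.eq_one_iff g).mp (htriv _ hq)
      have hφgA : φ g ∈ A := by
        have : φ g ∈ A.map φ.toMonoidHom := ⟨g, hgA, rfl⟩
        rwa [hφA] at this
      refine ⟨⟨g, hgA⟩, ?_⟩
      apply Subtype.ext
      push_cast
      rw [hφ']
      exact hg
    have fcls : ∀ a : A,
        (fun S : Set A => {y : B | ∃ a ∈ S, y ∈ tcCls φ (a : B)}) (tcCls φ' a)
          = tcCls φ (a : B) := by
      intro a
      ext y
      constructor
      · rintro ⟨b, hb, hy⟩
        obtain ⟨g, hg⟩ := hb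
        have hbB : (b : B) ∈ tcCls φ (a : B) := by
          refine ⟨(g : B), ?_⟩
          rw [hg]
          push_cast
          rw [hφ']
        rw [tcCls_eq_of_mem φ hbB] at hy
        exact hy
      · intro hy
        exact ⟨a, mem_tcCls_self φ' a, hy⟩
    have hinj : Set.InjOn (fun S : Set A => {y : B | ∃ a ∈ S, y ∈ tcCls φ (a : B)})
        (twistedConjClasses φ') := by
      rw [twistedConjClasses_eq_range]
      rintro S ⟨a₁, rfl⟩ T ⟨a₂, rfl⟩ hST
      simp only [fcls] at hST
      have : (a₂ : B) ∈ tcCls φ (a₁ : B) := hST ▸ mem_tcCls_self φ (a₂ : B)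
      exact (tcCls_eq_of_mem φ' (key a₁ a₂ this)).symm
    have himg : (fun S : Set A => {y : B | ∃ a ∈ S, y ∈ tcCls φ (a : B)}) ''
        twistedConjClasses φ' ⊆ twistedConjClasses φ := by
      rintro S ⟨T, hT, rfl⟩
      rw [twistedConjClasses_eq_range] at hT ⊢
      obtain ⟨a, rfl⟩ := hT
      exact ⟨(a : B), (fcls a).symm⟩
    exact ((hinf.image hinj)).mono himg
end
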